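/- arXiv:1909.04987 — 8 statements merged into one kernel-verified Lean document; each statement's English description precedes it below -/
import Mathlib

section
/- If V and W are locally countable pseudovarieties of finite semigroups, then their join V ∨ W (the smallest pseudovariety containing both V and W) is locally countable. -/
/-- A bundled finite semigroup. -/
structure FinSgp : Type 1 where
  carrier : Type
  [str : Semigroup carrier]
  [fin : Finite carrier]

attribute [instance] FinSgp.str FinSgp.fin

/-- Finite semigroups carry the discrete topology. -/
instance (T : FinSgp) : TopologicalSpace T.carrier := ⊥

instance (T : FinSgp) : DiscreteTopology T.carrier := ⟨rfl⟩

/-- A pseudovariety of finite semigroups: a class of finite semigroups closed under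
homomorphic images, (isomorphic copies of) subsemigroups, and binary direct products. -/
def IsPseudovariety (V : Set FinSgp) : Prop :=
  (∀ S ∈ V, ∀ (T : FinSgp) (f : S.carrier →ₙ* T.carrier), Function.Surjective f → T ∈ V) ∧
  (∀ S ∈ V, ∀ (T : FinSgp) (f : T.carrier →ₙ* S.carrier), Function.Injective f → T ∈ V) ∧
  (∀ S ∈ V, ∀ T ∈ V, (FinSgp.mk (S.carrier × T.carrier)) ∈ V)

/-- A profinite semigroup: a compact, Hausdorff, totally disconnected topological semigroup. -/
def IsProfiniteSgp (S : Type) [Semigroup S] [TopologicalSpace S] : Prop :=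
  ContinuousMul S ∧ CompactSpace S ∧ T2Space S ∧ TotallyDisconnectedSpace S

/-- A pro-V semigroup: a profinite semigroup whose points are separated by continuous
homomorphisms onto finite semigroups belonging to V. -/
def IsProV (V : Set FinSgp) (S : Type) [Semigroup S] [TopologicalSpace S] : Prop :=
  IsProfiniteSgp S ∧ ∀ x y : S, x ≠ y →
    ∃ (T : FinSgp) (f : S →ₙ* T.carrier),
      T ∈ V ∧ Continuous f ∧ Function.Surjective f ∧ f x ≠ f y

/-- `A` topologically generates the topological semigroup `S`. -/
def TopGen (S : Type) [Semigroup S] [TopologicalSpace S] (A : Set S) : Prop :=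
  closure ((Subsemigroup.closure A : Subsemigroup S) : Set S) = Set.univ

/-- A topological semigroup is locally countable if every closed subsemigroup
topologically generated by a finite subset is countable. -/
def IsLocCountable (S : Type) [Semigroup S] [TopologicalSpace S] : Prop :=
  ∀ A : Set S, A.Finite →
    (closure ((Subsemigroup.closure A : Subsemigroup S) : Set S)).Countable

/-- A pseudovariety is locally countable if every pro-V semigroup is locally countable. -/
def PVLocallyCountable (V : Set FinSgp) : Prop :=
  ∀ (S : Type) [Semigroup S] [TopologicalSpace S], IsProV V S → IsLocCountable S

/-- A pseudovariety is locally finite if every finitely generated pro-V semigroup is finite. -/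
def PVLocallyFinite (V : Set FinSgp) : Prop :=
  ∀ (S : Type) [Semigroup S] [TopologicalSpace S], IsProV V S →
    (∃ A : Set S, A.Finite ∧ TopGen S A) → Finite S

/-- The join of two pseudovarieties: the smallest pseudovariety containing both. -/
def PVJoin (V W : Set FinSgp) : Set FinSgp :=
  ⋂₀ {U | IsPseudovariety U ∧ V ⊆ U ∧ W ⊆ U}

/-- The preimage of an idempotent under a semigroup homomorphism, as a subsemigroup. -/
def idemFiber {S T : Type} [Semigroup S] [Semigroup T] (f : S →ₙ* T)
    (e : T) (he : e * e = e) : Subsemigroup S where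
  carrier := f ⁻¹' {e}
  mul_mem' := fun {a b} ha hb => by
    simp only [Set.mem_preimage, Set.mem_singleton_iff] at ha hb ⊢
    rw [map_mul, ha, hb, he]

/-- A subsemigroup of a finite semigroup, as a bundled finite semigroup. -/
def subFinSgp {S : Type} [Semigroup S] [Finite S] (T : Subsemigroup S) : FinSgp :=
  FinSgp.mk T

/-- The generators of the Mal'cev product `V ⓜ W`: finite semigroups `S` admitting a
homomorphism onto some `T ∈ W` whose fibers over idempotents lie in `V`. -/
def MalcevWitness (V W : Set FinSgp) (S : FinSgp) : Prop :=
  ∃ (T : FinSgp) (f : S.carrier →ₙ* T.carrier), T ∈ W ∧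
    ∀ (e : T.carrier) (he : e * e = e), subFinSgp (idemFiber f e he) ∈ V

/-- The Mal'cev product of two pseudovarieties: the smallest pseudovariety containing
all its generators. -/
def Malcev (V W : Set FinSgp) : Set FinSgp :=
  ⋂₀ {U | IsPseudovariety U ∧ ∀ S : FinSgp, MalcevWitness V W S → S ∈ U}

/-- Green's preorder `≤_L`. -/
def lLE {S : Type} [Semigroup S] (u v : S) : Prop := u = v ∨ ∃ x, u = x * v

/-- Green's relation `L`. -/
def GreenL {S : Type} [Semigroup S] (u v : S) : Prop := lLE u v ∧ lLE v u

/-- Green's preorder `≤_J`. -/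
def jLE {S : Type} [Semigroup S] (u v : S) : Prop :=
  u = v ∨ (∃ x, u = v * x) ∨ (∃ x, u = x * v) ∨ (∃ x y, u = x * v * y)

/-- Green's relation `J`. -/
def GreenJ {S : Type} [Semigroup S] (u v : S) : Prop := jLE u v ∧ jLE v u

/-- A regular element of a semigroup. -/
def IsRegularElt {S : Type} [Semigroup S] (s : S) : Prop := ∃ t, s = s * t * s

/-- `S` has only finitely many regular `J`-classes. -/
def FinManyRegJ (S : Type) [Semigroup S] : Prop :=
  ∃ F : Set S, F.Finite ∧ ∀ s : S, IsRegularElt s → ∃ t ∈ F, GreenJ s t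

/-- A subgroup of a semigroup: a subsemigroup which is a group under the induced
multiplication. -/
def IsSgpSubgroup (S : Type) [Semigroup S] (G : Set S) : Prop :=
  (∀ x ∈ G, ∀ y ∈ G, x * y ∈ G) ∧
  ∃ e ∈ G, (∀ x ∈ G, e * x = x ∧ x * e = x) ∧ (∀ x ∈ G, ∃ y ∈ G, x * y = e ∧ y * x = e)

/-- A group element of a semigroup: an element lying in some subgroup. -/
def IsGroupElt (S : Type) [Semigroup S] (s : S) : Prop :=
  ∃ G : Set S, IsSgpSubgroup S G ∧ s ∈ G

/-- `prodFrom f n` is the product `f 0 * f 1 * ⋯ * f n`. -/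
def prodFrom {S : Type} [Semigroup S] (f : ℕ → S) : ℕ → S
  | 0 => f 0
  | n + 1 => prodFrom f n * f (n + 1)

/-- A semigroup is nilpotent if it has a zero element and some length bound beyond
which all products equal zero. -/
def IsNilpotentSgp (S : Type) [Semigroup S] : Prop :=
  ∃ z : S, (∀ x : S, z * x = z ∧ x * z = z) ∧ ∃ n : ℕ, ∀ f : ℕ → S, prodFrom f n = z

/-- The pseudovariety `N` of finite nilpotent semigroups. -/
def NPv : Set FinSgp := {S | IsNilpotentSgp S.carrier}

/-- A semigroup which is a group. -/
def IsGroupSgp (S : Type) [Semigroup S] : Prop :=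
  ∃ e : S, (∀ x : S, e * x = x ∧ x * e = x) ∧ ∀ x : S, ∃ y : S, x * y = e ∧ y * x = e

/-- The pseudovariety `LG` of finite local groups: `eSe` is a group for each idempotent `e`. -/
def LG : Set FinSgp :=
  {S | ∀ e : S.carrier, e * e = e → ∀ s : S.carrier,
      ∃ t : S.carrier, (e * s * e) * (e * t * e) = e ∧ (e * t * e) * (e * s * e) = e}

/-- The pseudovariety `IE` of finite semigroups with exactly one idempotent. -/
def IE : Set FinSgp := {S | ∃! e : S.carrier, e * e = e}

/-- A bundled topological semigroup (carrier, multiplication, topology). -/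
structure TopSgp : Type 1 where
  carrier : Type
  [str : Semigroup carrier]
  [top : TopologicalSpace carrier]

attribute [instance] TopSgp.str TopSgp.top

/-- The fiber of a relational morphism over an idempotent, as a subsemigroup of the
domain. -/
def relFiber {S T : Type} [Semigroup S] [Semigroup T] (μ : Subsemigroup (S × T))
    (e : T) (he : e * e = e) : Subsemigroup S where
  carrier := {s | (s, e) ∈ μ}
  mul_mem' := fun {a b} ha hb => by
    have h := μ.mul_mem ha hb
    simpa [Prod.mk_mul_mk, he] using h

/-- `spow x n = x ^ (n + 1)` in a semigroup. -/
def spow {S : Type} [Semigroup S] (x : S) : ℕ → S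
  | 0 => x
  | n + 1 => spow x n * x

/-- The pseudovariety `A ∩ ESl` of finite aperiodic semigroups with commuting idempotents. -/
def AESl : Set FinSgp :=
  {S | (∃ n : ℕ, ∀ x : S.carrier, spow x (n + 1) = spow x n) ∧
       (∀ e f : S.carrier, e * e = e → f * f = f → e * f = f * e)}

/-! The free pro-(V ∨ W) semigroup on a finite alphabet embeds into the product of the free
pro-V and the free pro-W semigroups, which are countable by hypothesis. Indeed, the finite
semigroups of V ∨ W that do not separate two given points of the free object form a
pseudovariety (closure under quotients is where freeness is used: generators lift along a
surjection), and it contains V and W when the points are separated neither over V nor over W.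
Finally, a pro-(V ∨ W) semigroup embeds into the product of its finite quotients in V ∨ W, and
there each finitely generated closed subsemigroup is a continuous image of the free object. -/

open Set Function

instance {α : Type} : TopologicalSpace (FreeSemigroup α) := ⊥

instance {α : Type} : DiscreteTopology (FreeSemigroup α) := ⟨rfl⟩

theorem FreeSemigroup.closure_range_of (α : Type) :
    Subsemigroup.closure (range (FreeSemigroup.of : α → FreeSemigroup α)) = ⊤ := by
  refine (Subsemigroup.eq_top_iff' _).2 fun x => ?_
  induction x using FreeSemigroup.recOnMul with
  | ih1 a => exact Subsemigroup.subset_closure ⟨a, rfl⟩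
  | ih2 a x _ hx => exact mul_mem (Subsemigroup.subset_closure ⟨a, rfl⟩) hx

theorem FreeSemigroup.range_eq_closure {α M : Type} [Semigroup M]
    (f : FreeSemigroup α →ₙ* M) :
    range f = Subsemigroup.closure (range (f ∘ FreeSemigroup.of)) := by
  rw [← MulHom.coe_srange, MulHom.srange_eq_map, ← FreeSemigroup.closure_range_of,
    MulHom.map_mclosure, range_comp]

theorem IsPseudovariety.sInter {𝒰 : Set (Set FinSgp)} (h : ∀ U ∈ 𝒰, IsPseudovariety U) :
    IsPseudovariety (⋂₀ 𝒰) := by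
  refine ⟨?_, ?_, ?_⟩
  · exact fun S hS T f hf => mem_sInter.2 fun U hU => (h U hU).1 S (hS U hU) T f hf
  · exact fun S hS T f hf => mem_sInter.2 fun U hU => (h U hU).2.1 S (hS U hU) T f hf
  · exact fun S hS T hT => mem_sInter.2 fun U hU => (h U hU).2.2 S (hS U hU) T (hT U hU)

section PVJoin

variable (V W : Set FinSgp)

theorem isPseudovariety_pvJoin : IsPseudovariety (PVJoin V W) :=
  IsPseudovariety.sInter fun _ hU => hU.1

theorem subset_pvJoin_left : V ⊆ PVJoin V W :=
  fun _ hT => mem_sInter.2 fun _ hU => hU.2.1 hT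

theorem subset_pvJoin_right : W ⊆ PVJoin V W :=
  fun _ hT => mem_sInter.2 fun _ hU => hU.2.2 hT

variable {V W} in
theorem pvJoin_subset {K : Set FinSgp} (hK : IsPseudovariety K) (hV : V ⊆ K) (hW : W ⊆ K) :
    PVJoin V W ⊆ K :=
  fun _ hT => mem_sInter.1 hT K ⟨hK, hV, hW⟩

end PVJoin

theorem FinSgp.continuous_comp {T : FinSgp} {X Y : Type} [TopologicalSpace X]
    [TopologicalSpace Y] (f : T.carrier → Y) {g : X → T.carrier} (hg : Continuous g) :
    Continuous (f ∘ g) :=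
  continuous_of_discreteTopology.comp hg

def finSgpOn (n : ℕ) (s : Semigroup (Fin n)) : FinSgp := { carrier := Fin n, str := s }

/-- Finite quotients are encoded on `Fin n` so that they form a type in `Type` (unlike
`FinSgp`); products over them are then again in `Type`. -/
structure FinHom (S : Type) [Semigroup S] [TopologicalSpace S] where
  card : ℕ
  sgp : Semigroup (Fin card)
  hom : S →ₙ* (finSgpOn card sgp).carrier
  continuous_hom : Continuous hom

namespace FinHom

variable {S : Type} [Semigroup S] [TopologicalSpace S]

def target (i : FinHom S) : FinSgp := finSgpOn i.card i.sgp

def comp {S' : Type} [Semigroup S'] [TopologicalSpace S'] (i : FinHom S') (g : S →ₙ* S')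
    (hg : Continuous g) : FinHom S :=
  ⟨i.card, i.sgp, i.hom.comp g, i.continuous_hom.comp hg⟩

theorem exists_mulEquiv_comp {U : Set FinSgp} (hU : IsPseudovariety U) {T : FinSgp}
    (hT : T ∈ U) (f : S →ₙ* T.carrier) (hf : Continuous f) :
    ∃ (i : FinHom S) (σ : i.target.carrier ≃* T.carrier),
      i.target ∈ U ∧ ∀ s, σ (i.hom s) = f s := by
  let e := Finite.equivFin T.carrier
  let sgp : Semigroup (Fin (Nat.card T.carrier)) := e.symm.semigroup
  let σ : (finSgpOn _ sgp).carrier ≃* T.carrier := e.symm.mulEquiv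
  exact ⟨⟨_, sgp, σ.symm.toMulHom.comp f, FinSgp.continuous_comp σ.symm hf⟩, σ,
    hU.2.1 T hT _ σ.toMulHom σ.injective, fun s => σ.apply_symm_apply (f s)⟩

end FinHom

abbrev ProU (U : Set FinSgp) (S : Type) [Semigroup S] [TopologicalSpace S] : Type :=
  ∀ i : {i : FinHom S // i.target ∈ U}, i.1.target.carrier

namespace ProU

variable (U : Set FinSgp) (S : Type) [Semigroup S] [TopologicalSpace S]

def of : S →ₙ* ProU U S where
  toFun s i := i.1.hom s
  map_mul' x y := funext fun i => map_mul i.1.hom x y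

theorem continuous_of : Continuous (of U S) :=
  continuous_pi fun i => i.1.continuous_hom

def eval (i : {i : FinHom S // i.target ∈ U}) : ProU U S →ₙ* i.1.target.carrier :=
  Pi.evalMulHom _ i

theorem continuous_eval (i : {i : FinHom S // i.target ∈ U}) : Continuous (eval U S i) :=
  continuous_apply i

theorem isProV : IsProV U (ProU U S) := by
  refine ⟨⟨inferInstance, inferInstance, inferInstance, inferInstance⟩, fun x y hxy => ?_⟩
  obtain ⟨i, hi⟩ := Function.ne_iff.mp hxy
  have : ∀ j : {i : FinHom S // i.target ∈ U}, Nonempty j.1.target.carrier := fun j => ⟨x j⟩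
  exact ⟨i.1.target, eval U S i, i.2, continuous_eval U S i, surjective_eval i, hi⟩

variable {U S} in
theorem of_injective (hU : IsPseudovariety U) (hS : IsProV U S) : Injective (of U S) := by
  intro x y hxy
  by_contra hne
  obtain ⟨T, f, hT, hf, -, hfxy⟩ := hS.2 x y hne
  obtain ⟨i, σ, hi, hσ⟩ := FinHom.exists_mulEquiv_comp hU hT f hf
  exact hfxy (by rw [← hσ, ← hσ]; exact congrArg σ (congrFun hxy ⟨i, hi⟩))

variable {S} {S' : Type} [Semigroup S'] [TopologicalSpace S']

def map (g : S →ₙ* S') (hg : Continuous g) : ProU U S →ₙ* ProU U S' where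
  toFun p j := p ⟨j.1.comp g hg, j.2⟩
  map_mul' _ _ := rfl

theorem continuous_map (g : S →ₙ* S') (hg : Continuous g) : Continuous (map U g hg) :=
  continuous_pi fun _ => continuous_apply _

theorem map_comp_of (g : S →ₙ* S') (hg : Continuous g) :
    (map U g hg).comp (of U S) = (of U S').comp g :=
  rfl

variable {U} {V : Set FinSgp}

def restrict (hVU : V ⊆ U) : ProU U S →ₙ* ProU V S where
  toFun p i := p ⟨i.1, hVU i.2⟩
  map_mul' _ _ := rfl

theorem mapsTo_restrict_closure_range_of (hVU : V ⊆ U) :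
    MapsTo (restrict hVU) (closure (range (of U S))) (closure (range (of V S))) :=
  MapsTo.closure (by rintro _ ⟨x, rfl⟩; exact ⟨x, rfl⟩)
    (continuous_pi fun _ => continuous_apply _)

end ProU

def freeProU (U : Set FinSgp) (α : Type) : Set (ProU U (FreeSemigroup α)) :=
  closure (range (ProU.of U (FreeSemigroup α)))

section LocCountable

variable {U : Set FinSgp}

theorem countable_freeProU (hUc : PVLocallyCountable U) (α : Type) [Finite α] :
    (freeProU U α).Countable := by
  rw [freeProU, FreeSemigroup.range_eq_closure]
  exact hUc _ (ProU.isProV U _) _ (finite_range _)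

theorem IsProV.isLocCountable_of_countable_freeProU {S : Type} [Semigroup S]
    [TopologicalSpace S] (hU : IsPseudovariety U) (hS : IsProV U S)
    (hfree : ∀ (α : Type) [Finite α], (freeProU U α).Countable) : IsLocCountable S := by
  have : CompactSpace S := hS.1.2.1
  intro A hA
  have : Finite A := hA.to_subtype
  let g : FreeSemigroup A →ₙ* S := FreeSemigroup.lift Subtype.val
  have hg : Continuous g := continuous_of_discreteTopology
  have hC : closure (Subsemigroup.closure A : Set S) = closure (range g) := by
    rw [FreeSemigroup.range_eq_closure]
    congr
    ext
    simp [g]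
  have himage : ProU.of U S '' closure (range g) = ProU.map U g hg '' freeProU U A := by
    rw [freeProU, ← (ProU.continuous_of U S).isClosedMap.closure_image_eq_of_continuous
        (ProU.continuous_of U S),
      ← (ProU.continuous_map U g hg).isClosedMap.closure_image_eq_of_continuous
        (ProU.continuous_map U g hg),
      ← range_comp, ← range_comp, ← MulHom.coe_comp, ← MulHom.coe_comp, ProU.map_comp_of]
  rw [hC]
  refine (((hfree A).image (ProU.map U g hg)).preimage (ProU.of_injective hU hS)).mono ?_
  rw [← himage]
  exact subset_preimage_image _ _

end LocCountable

def nonSeparating (U : Set FinSgp) {Y : Type} [Semigroup Y] [TopologicalSpace Y] (p q : Y) :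
    Set FinSgp :=
  {T | T ∈ U ∧ ∀ φ : Y →ₙ* T.carrier, Continuous φ → φ p = φ q}

section NonSeparating

variable {U : Set FinSgp} {α : Type}

theorem eqOn_freeProU {T : Type} [Semigroup T] [TopologicalSpace T] [T2Space T]
    {φ ψ : ProU U (FreeSemigroup α) →ₙ* T} (hφ : Continuous φ) (hψ : Continuous ψ)
    (h : ∀ a, φ (ProU.of U _ (FreeSemigroup.of a)) = ψ (ProU.of U _ (FreeSemigroup.of a))) :
    EqOn φ ψ (freeProU U α) := by
  have hcomp : φ.comp (ProU.of U _) = ψ.comp (ProU.of U _) := FreeSemigroup.hom_ext (funext h)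
  refine EqOn.closure ?_ hφ hψ
  rintro _ ⟨x, rfl⟩
  exact DFunLike.congr_fun hcomp x

variable {p q : ProU U (FreeSemigroup α)}

theorem nonSeparating_of_surjective (hU : IsPseudovariety U) (hp : p ∈ freeProU U α)
    (hq : q ∈ freeProU U α) {T : FinSgp} (hT : T ∈ nonSeparating U p q) (T' : FinSgp)
    (g : T.carrier →ₙ* T'.carrier) (hg : Surjective g) : T' ∈ nonSeparating U p q := by
  refine ⟨hU.1 T hT.1 T' g hg, fun φ hφ => ?_⟩
  choose t ht using fun a => hg (φ (ProU.of U _ (FreeSemigroup.of a)))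
  obtain ⟨i, σ, hi, hσ⟩ :=
    FinHom.exists_mulEquiv_comp hU hT.1 (FreeSemigroup.lift t) continuous_of_discreteTopology
  let ψ : ProU U (FreeSemigroup α) →ₙ* T.carrier :=
    σ.toMulHom.comp (ProU.eval U _ ⟨i, hi⟩)
  have hψ : Continuous ψ := FinSgp.continuous_comp σ (ProU.continuous_eval U _ _)
  have hφψ : EqOn φ (g.comp ψ) (freeProU U α) :=
    eqOn_freeProU hφ (FinSgp.continuous_comp g hψ) fun a => by
      rw [← ht]
      exact congrArg g (hσ (FreeSemigroup.of a)).symm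
  rw [hφψ hp, hφψ hq]
  exact congrArg g (hT.2 ψ hψ)

theorem isPseudovariety_nonSeparating (hU : IsPseudovariety U) (hp : p ∈ freeProU U α)
    (hq : q ∈ freeProU U α) : IsPseudovariety (nonSeparating U p q) := by
  refine ⟨fun T hT => nonSeparating_of_surjective hU hp hq hT, ?_, ?_⟩
  · rintro T ⟨hTU, hT⟩ T' f hf
    exact ⟨hU.2.1 T hTU T' f hf,
      fun φ hφ => hf (hT (f.comp φ) (FinSgp.continuous_comp f hφ))⟩
  · rintro T₁ ⟨hT₁U, hT₁⟩ T₂ ⟨hT₂U, hT₂⟩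
    refine ⟨hU.2.2 T₁ hT₁U T₂ hT₂U, fun φ hφ => Prod.ext ?_ ?_⟩
    · exact hT₁ ((MulHom.fst _ _).comp φ)
        (FinSgp.continuous_comp (T := ⟨T₁.carrier × T₂.carrier⟩) Prod.fst hφ)
    · exact hT₂ ((MulHom.snd _ _).comp φ)
        (FinSgp.continuous_comp (T := ⟨T₁.carrier × T₂.carrier⟩) Prod.snd hφ)

theorem subset_nonSeparating {V : Set FinSgp} (hV : IsPseudovariety V) (hVU : V ⊆ U)
    (hp : p ∈ freeProU U α) (hq : q ∈ freeProU U α)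
    (hpq : ProU.restrict hVU p = ProU.restrict hVU q) : V ⊆ nonSeparating U p q := by
  intro T hT
  refine ⟨hVU hT, fun φ hφ => ?_⟩
  obtain ⟨i, σ, hi, hσ⟩ := FinHom.exists_mulEquiv_comp hV hT (φ.comp (ProU.of U _))
    continuous_of_discreteTopology
  let ψ : ProU U (FreeSemigroup α) →ₙ* T.carrier :=
    σ.toMulHom.comp (ProU.eval U _ ⟨i, hVU hi⟩)
  have hφψ : EqOn φ ψ (freeProU U α) :=
    eqOn_freeProU hφ (FinSgp.continuous_comp σ (ProU.continuous_eval U _ _))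
      fun a => (hσ _).symm
  rw [hφψ hp, hφψ hq]
  exact congrArg σ (congrFun hpq ⟨i, hi⟩)

theorem eq_of_subset_nonSeparating {S : Type} [Semigroup S] [TopologicalSpace S]
    {p q : ProU U S} (h : U ⊆ nonSeparating U p q) : p = q :=
  funext fun i => (h i.2).2 (ProU.eval U S i) (ProU.continuous_eval U S i)

end NonSeparating

theorem countable_freeProU_pvJoin {V W : Set FinSgp} (hV : IsPseudovariety V)
    (hW : IsPseudovariety W) (hVc : PVLocallyCountable V) (hWc : PVLocallyCountable W)
    (α : Type) [Finite α] : (freeProU (PVJoin V W) α).Countable := by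
  let restrictPair (p : ProU (PVJoin V W) (FreeSemigroup α)) :=
    (ProU.restrict (subset_pvJoin_left V W) p, ProU.restrict (subset_pvJoin_right V W) p)
  have hmaps : MapsTo restrictPair (freeProU (PVJoin V W) α) (freeProU V α ×ˢ freeProU W α) :=
    fun p hp => ⟨ProU.mapsTo_restrict_closure_range_of _ hp,
      ProU.mapsTo_restrict_closure_range_of _ hp⟩
  refine hmaps.countable_of_injOn (fun p hp q hq hpq => ?_)
    ((countable_freeProU hVc α).prod (countable_freeProU hWc α))
  refine eq_of_subset_nonSeparating (pvJoin_subset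
    (isPseudovariety_nonSeparating (isPseudovariety_pvJoin V W) hp hq) ?_ ?_)
  · exact subset_nonSeparating hV _ hp hq (congrArg Prod.fst hpq)
  · exact subset_nonSeparating hW _ hp hq (congrArg Prod.snd hpq)

/-- If `V` and `W` are locally countable pseudovarieties of finite
semigroups, then so is their join `V ∨ W`. -/
theorem join_locallyCountable (V W : Set FinSgp)
    (hV : IsPseudovariety V) (hW : IsPseudovariety W)
    (hVc : PVLocallyCountable V) (hWc : PVLocallyCountable W) :
    PVLocallyCountable (PVJoin V W) := fun _ _ _ hS =>
  hS.isLocCountable_of_countable_freeProU (isPseudovariety_pvJoin V W)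
    (countable_freeProU_pvJoin hV hW hVc hWc)
end

section
/- Let S be a profinite semigroup topologically generated by a finite subset A, let T be a finite semigroup, and let φ : S → T be a continuous semigroup homomorphism. Then S equals the subsemigroup generated algebraically (without taking closure) by A together with the set {s ∈ S : φ(s) is idempotent}. -/
/-!
Put `C = A ∪ φ⁻¹(E(T))`. A Ramsey argument for triangles shows that every sufficiently long
word over a finite semigroup has a factor of length at least two whose value is idempotent; such
a factor of a product of elements of `C` can be merged into a single element of `C`. Hence every
element of the subsemigroup generated by `C` is a product of at most `R` elements of `C`, for a
bound `R` depending only on `T`; in `WithOne S` these products form the `R`-th power of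
`{1} ∪ C`. That set is compact, because `C` is, and it contains `A`; so it contains the closure
of the subsemigroup generated by `A`, which is `S`.
-/

open Pointwise

/-- The bound from the pigeonhole recursion in Ramsey's theorem for triangles in `k` colours. -/
def ramseyBound : ℕ → ℕ
  | 0 => 2
  | k + 1 => (k + 1) * ramseyBound k + 1

/-- A monochromatic triangle `i < j < k` of a colouring satisfying the cocycle identity has an
idempotent colour `e = e * e`. -/
theorem exists_isIdempotentElem_of_mul_cocycle {N : Type*} [Semigroup N] (c : ℕ → ℕ → N)
    (hc : ∀ i j k, i < j → j < k → c i j * c j k = c i k) (K : Finset N) (I : Finset ℕ)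
    (hI : ramseyBound K.card ≤ I.card) (hK : ∀ i ∈ I, ∀ j ∈ I, i < j → c i j ∈ K) :
    ∃ i ∈ I, ∃ j ∈ I, i < j ∧ IsIdempotentElem (c i j) := by
  classical
  induction hk : K.card generalizing K I with
  | zero =>
    obtain ⟨i, hi, j, hj, hij⟩ := (Finset.one_lt_card (s := I)).mp
      (by rw [hk] at hI; simp only [ramseyBound] at hI; omega)
    rw [Finset.card_eq_zero] at hk
    subst hk
    rcases hij.lt_or_gt with h | h
    · exact absurd (hK i hi j hj h) (Finset.notMem_empty _)
    · exact absurd (hK j hj i hi h) (Finset.notMem_empty _)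
  | succ k ih =>
    rw [hk] at hI
    have hI₀ : I.Nonempty := by rw [← Finset.card_pos]; simp only [ramseyBound] at hI; omega
    set i₀ := I.min' hI₀
    have hi₀ : i₀ ∈ I := I.min'_mem hI₀
    have hlt : ∀ j ∈ I.erase i₀, i₀ < j := fun j hj =>
      (I.min'_le j (Finset.mem_of_mem_erase hj)).lt_of_ne (Finset.ne_of_mem_erase hj).symm
    obtain ⟨e, heK, hJ⟩ := Finset.exists_le_card_fiber_of_mul_le_card_of_maps_to
      (fun j hj => hK _ hi₀ j (Finset.mem_of_mem_erase hj) (hlt j hj))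
      (Finset.card_pos.mp (by omega)) (n := ramseyBound k)
      (by rw [Finset.card_erase_of_mem hi₀, hk]; simp only [ramseyBound] at hI; omega)
    set J := (I.erase i₀).filter (c i₀ · = e)
    have hJI : J ⊆ I := (Finset.filter_subset _ _).trans (Finset.erase_subset _ _)
    by_cases hrep : ∃ j ∈ J, ∃ l ∈ J, j < l ∧ c j l = e
    · obtain ⟨j, hj, l, hl, hjl, hcjl⟩ := hrep
      simp only [J, Finset.mem_filter] at hj hl
      refine ⟨i₀, hi₀, j, hJI (by simp [J, hj]), hlt j hj.1, ?_⟩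
      calc c i₀ j * c i₀ j = c i₀ j * c j l := by rw [hj.2, hcjl]
        _ = c i₀ l := hc _ _ _ (hlt j hj.1) hjl
        _ = c i₀ j := by rw [hl.2, hj.2]
    · push Not at hrep
      obtain ⟨i, hi, j, hj, hij, hidem⟩ := ih (K.erase e) J
        (by rwa [Finset.card_erase_of_mem heK, hk])
        (fun i hi j hj hij =>
          Finset.mem_erase.mpr ⟨hrep i hi j hj hij, hK i (hJI hi) j (hJI hj) hij⟩)
        (by rw [Finset.card_erase_of_mem heK, hk]; rfl)
      exact ⟨i, hJI hi, j, hJI hj, hij, hidem⟩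

theorem List.take_drop_sub_eq_append {α : Type*} (l : List α) {i j k : ℕ} (hij : i ≤ j)
    (hjk : j ≤ k) :
    (l.drop i).take (k - i) = (l.drop i).take (j - i) ++ (l.drop j).take (k - j) := by
  rw [show k - i = (j - i) + (k - j) by omega, List.take_add, List.drop_drop,
    Nat.add_sub_cancel' hij]

theorem exists_isIdempotentElem_infix {α N : Type*} [Monoid N] [Finite N] (f : α → N) :
    ∃ R, ∀ l : List α, R ≤ l.length →
      ∃ p u q, l = p ++ u ++ q ∧ 2 ≤ u.length ∧ IsIdempotentElem (u.map f).prod := by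
  have := Fintype.ofFinite N
  refine ⟨2 * ramseyBound (Fintype.card N), fun l hl => ?_⟩
  -- Only even cut points are used, so that the factor found has length at least two.
  obtain ⟨i, hi, j, hj, hij, hidem⟩ := exists_isIdempotentElem_of_mul_cocycle
    (fun i j => (((l.drop (2 * i)).take (2 * j - 2 * i)).map f).prod)
    (fun i j k hij hjk => by
      simp only [l.take_drop_sub_eq_append (by omega : 2 * i ≤ 2 * j)
        (by omega : 2 * j ≤ 2 * k), List.map_append, List.prod_append])
    Finset.univ (Finset.range (ramseyBound (Fintype.card N))) (by simp)
    (fun _ _ _ _ _ => Finset.mem_univ _)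
  rw [Finset.mem_range] at hi hj
  refine ⟨l.take (2 * i), (l.drop (2 * i)).take (2 * j - 2 * i),
    (l.drop (2 * i)).drop (2 * j - 2 * i), by simp only [List.append_assoc,
      List.take_append_drop], ?_, hidem⟩
  simp only [List.length_take, List.length_drop]
  omega

theorem list_prod_mem_pow_length {M : Type*} [Monoid M] {C : Set M} {l : List M}
    (hl : ∀ x ∈ l, x ∈ C) : l.prod ∈ C ^ l.length := by
  induction l with
  | nil => simp
  | cons x l ih =>
    rw [List.prod_cons, List.length_cons, pow_succ']
    exact Set.mul_mem_mul (hl x List.mem_cons_self)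
      (ih fun y hy => hl y (List.mem_cons_of_mem _ hy))

theorem exists_pow_subset_pow_of_isIdempotentElem {M N : Type*} [Monoid M] [Monoid N]
    [Finite N] (ψ : M →* N) {C : Set M} (hC : ∀ x, IsIdempotentElem (ψ x) → x ∈ C) :
    ∃ R, ∀ n, C ^ n ⊆ C ^ R := by
  obtain ⟨R, hR⟩ := exists_isIdempotentElem_infix ψ
  suffices key : ∀ l : List M, (∀ x ∈ l, x ∈ C) → l.prod ∈ C ^ R by
    refine ⟨R, fun n x hx => ?_⟩
    obtain ⟨f, rfl⟩ := Set.mem_pow.mp hx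
    exact key _ (by simp)
  intro l hl
  induction hn : l.length using Nat.strong_induction_on generalizing l with
  | _ n ih =>
    by_cases hnR : n ≤ R
    · exact Set.pow_subset_pow_right (hC 1 (by simp [IsIdempotentElem])) hnR
        (hn ▸ list_prod_mem_pow_length hl)
    obtain ⟨p, u, q, rfl, hu, hidem⟩ := hR l (by omega)
    have huC : u.prod ∈ C := hC _ (by rwa [map_list_prod])
    have hshorter : (p ++ [u.prod] ++ q).length < n := by
      simp only [List.length_append, List.length_singleton] at hn ⊢
      omega
    have hmerged := ih _ hshorter (p ++ [u.prod] ++ q)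
      (by simp only [List.mem_append, List.mem_singleton] at hl ⊢; grind) rfl
    simpa only [List.prod_append, List.prod_singleton] using hmerged

namespace WithOne

variable {S : Type*}

instance [Finite S] : Finite (WithOne S) := inferInstanceAs (Finite (Option S))

theorem preimage_coe_one : ((↑) : S → WithOne S) ⁻¹' 1 = ∅ :=
  Set.eq_empty_of_forall_notMem fun _ => coe_ne_one

theorem preimage_coe_insert_one_image (C : Set S) :
    ((↑) : S → WithOne S) ⁻¹' insert 1 ((↑) '' C) = C := by
  ext; simp

variable [Semigroup S]

theorem preimage_coe_mul {X Y : Set (WithOne S)} (hX : 1 ∈ X) (hY : 1 ∈ Y) :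
    ((↑) : S → WithOne S) ⁻¹' (X * Y) = (↑) ⁻¹' X ∪ (↑) ⁻¹' Y ∪ (↑) ⁻¹' X * (↑) ⁻¹' Y := by
  ext s
  simp only [Set.mem_preimage, Set.mem_union, Set.mem_mul]
  constructor
  · rintro ⟨x, hx, y, hy, hxy⟩
    induction x with
    | one => rw [one_mul] at hxy; exact Or.inl (Or.inr (hxy ▸ hy))
    | coe a =>
      induction y with
      | one => rw [mul_one, coe_inj] at hxy; exact Or.inl (Or.inl (hxy ▸ hx))
      | coe b => exact Or.inr ⟨a, hx, b, hy, coe_inj.mp hxy⟩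
  · rintro ((hs | hs) | ⟨a, ha, b, hb, rfl⟩)
    · exact ⟨s, hs, 1, hY, mul_one _⟩
    · exact ⟨1, hX, s, hs, one_mul _⟩
    · exact ⟨a, ha, b, hb, rfl⟩

theorem preimage_coe_pow_subset_closure (C : Set S) (n : ℕ) :
    ((↑) : S → WithOne S) ⁻¹' (insert 1 ((↑) '' C) ^ n) ⊆ Subsemigroup.closure C := by
  induction n with
  | zero => simp [preimage_coe_one]
  | succ n ih =>
    rw [pow_succ, preimage_coe_mul (Set.one_mem_pow (Set.mem_insert _ _)) (Set.mem_insert _ _),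
      preimage_coe_insert_one_image]
    refine Set.union_subset (Set.union_subset ih Subsemigroup.subset_closure) ?_
    rintro _ ⟨a, ha, b, hb, rfl⟩
    exact mul_mem (ih ha) (Subsemigroup.subset_closure hb)

theorem isCompact_preimage_coe_pow [TopologicalSpace S] [ContinuousMul S] {C : Set S}
    (hC : IsCompact C) (n : ℕ) :
    IsCompact (((↑) : S → WithOne S) ⁻¹' (insert 1 ((↑) '' C) ^ n)) := by
  induction n with
  | zero => simp [preimage_coe_one]
  | succ n ih =>
    rw [pow_succ, preimage_coe_mul (Set.one_mem_pow (Set.mem_insert _ _)) (Set.mem_insert _ _),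
      preimage_coe_insert_one_image]
    exact (ih.union hC).union (ih.mul hC)

theorem closure_subset_iUnion_preimage_coe_pow {A : Set S} {X : Set (WithOne S)}
    (hA : (↑) '' A ⊆ X) :
    (Subsemigroup.closure A : Set S) ⊆ ⋃ n, ((↑) : S → WithOne S) ⁻¹' (X ^ n) := by
  intro s hs
  induction hs using Subsemigroup.closure_induction with
  | mem a ha => exact Set.mem_iUnion.mpr ⟨1, by simpa using hA ⟨a, ha, rfl⟩⟩
  | mul a b _ _ ha hb =>
    obtain ⟨m, ha⟩ := Set.mem_iUnion.mp ha
    obtain ⟨n, hb⟩ := Set.mem_iUnion.mp hb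
    refine Set.mem_iUnion.mpr ⟨m + n, ?_⟩
    rw [Set.mem_preimage, coe_mul, pow_add]
    exact Set.mul_mem_mul ha hb

end WithOne

/-- If `S` is a profinite semigroup topologically generated by a finite
set `A` and `φ : S → T` is a continuous homomorphism into a finite semigroup, then `S` is
algebraically generated by `A` together with the elements mapping to idempotents of `T`. -/
theorem algebraically_generated_of_fiber_idempotents
    (S : Type) [Semigroup S] [TopologicalSpace S] (hS : IsProfiniteSgp S)
    (A : Set S) (hA : A.Finite) (hgen : TopGen S A)
    (T : Type) [Semigroup T] [Finite T] [TopologicalSpace T] [DiscreteTopology T]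
    (φ : S →ₙ* T) (hφ : Continuous φ) :
    (Subsemigroup.closure (A ∪ {s : S | φ s * φ s = φ s}) : Set S) = Set.univ := by
  obtain ⟨_, _, _, -⟩ := hS
  set C := A ∪ {s : S | φ s * φ s = φ s}
  have hC : IsCompact C :=
    hA.isCompact.union ((isClosed_discrete {t : T | t * t = t}).preimage hφ).isCompact
  obtain ⟨R, hR⟩ := exists_pow_subset_pow_of_isIdempotentElem (WithOne.mapMulHom φ)
    (C := insert 1 ((↑) '' C)) fun x hx => by
      induction x with
      | one => exact Set.mem_insert _ _
      | coe s => exact Set.mem_insert_of_mem _ ⟨s, Or.inr (WithOne.coe_inj.mp hx), rfl⟩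
  have hAR : (Subsemigroup.closure A : Set S) ⊆
      ((↑) : S → WithOne S) ⁻¹' (insert 1 ((↑) '' C) ^ R) :=
    (WithOne.closure_subset_iUnion_preimage_coe_pow
      ((Set.image_mono Set.subset_union_left).trans (Set.subset_insert _ _))).trans
      (Set.iUnion_subset fun n => Set.preimage_mono (hR n))
  have hSR := closure_minimal hAR (WithOne.isCompact_preimage_coe_pow hC R).isClosed
  rw [hgen] at hSR
  exact Set.eq_univ_of_univ_subset (hSR.trans (WithOne.preimage_coe_pow_subset_closure C R))
end

section
/- Let S be a profinite semigroup and let u, v ∈ S. Then u and v are Green L-related in S if and only if, for every continuous homomorphism φ from S onto a finite semigroup T, the elements φ(u) and φ(v) are Green L-related in T. -/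
section Syn
variable {S : Type} [Semigroup S]

def synRel (U : Set S) (x y : S) : Prop :=
  (x ∈ U ↔ y ∈ U) ∧ (∀ s, s * x ∈ U ↔ s * y ∈ U) ∧ (∀ t, x * t ∈ U ↔ y * t ∈ U) ∧
    (∀ s t, s * x * t ∈ U ↔ s * y * t ∈ U)

theorem synRel_refl (U : Set S) (x : S) : synRel U x x :=
  ⟨Iff.rfl, fun _ => Iff.rfl, fun _ => Iff.rfl, fun _ _ => Iff.rfl⟩

theorem synRel_symm {U : Set S} {x y : S} (h : synRel U x y) : synRel U y x :=
  ⟨h.1.symm, fun s => (h.2.1 s).symm, fun t => (h.2.2.1 t).symm, fun s t => (h.2.2.2 s t).symm⟩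

theorem synRel_trans {U : Set S} {x y z : S} (h : synRel U x y) (h' : synRel U y z) :
    synRel U x z :=
  ⟨h.1.trans h'.1, fun s => (h.2.1 s).trans (h'.2.1 s), fun t => (h.2.2.1 t).trans (h'.2.2.1 t),
    fun s t => (h.2.2.2 s t).trans (h'.2.2.2 s t)⟩

theorem synRel_mul_left {U : Set S} (a : S) {x y : S} (h : synRel U x y) :
    synRel U (a * x) (a * y) := by
  obtain ⟨h1, h2, h3, h4⟩ := h
  refine ⟨h2 a, fun s => ?_, fun t => h4 a t, fun s t => ?_⟩
  · simpa only [← mul_assoc] using h2 (s * a)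
  · simpa only [← mul_assoc] using h4 (s * a) t

theorem synRel_mul_right {U : Set S} (a : S) {x y : S} (h : synRel U x y) :
    synRel U (x * a) (y * a) := by
  obtain ⟨h1, h2, h3, h4⟩ := h
  refine ⟨h3 a, fun s => ?_, fun t => ?_, fun s t => ?_⟩
  · simpa only [← mul_assoc] using h4 s a
  · simpa only [mul_assoc] using h3 (a * t)
  · have := h4 s (a * t); simpa only [mul_assoc] using this

def synSetoid (U : Set S) : Setoid S :=
  ⟨synRel U, ⟨synRel_refl U, synRel_symm, synRel_trans⟩⟩

/-- Quotient of a semigroup by the syntactic equivalence of a set. -/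
def SynQuot (U : Set S) : Type := Quotient (synSetoid U)

instance (U : Set S) : Semigroup (SynQuot U) where
  mul := Quotient.map₂ (· * ·) (fun _ a' ha b _ hb =>
    synRel_trans (synRel_mul_right b ha) (synRel_mul_left a' hb))
  mul_assoc a b c := by
    refine Quotient.inductionOn₃ a b c fun x y z => ?_
    exact congrArg (Quotient.mk _) (mul_assoc x y z)

/-- The syntactic quotient map as a multiplicative homomorphism. -/
def synMk (U : Set S) : S →ₙ* SynQuot U where
  toFun x := Quotient.mk (synSetoid U) x
  map_mul' _ _ := rfl

theorem synMk_surjective (U : Set S) : Function.Surjective (synMk U) :=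
  fun q => Quotient.exists_rep q

theorem synRel_of_eq {U : Set S} {x y : S} (h : synMk U x = synMk U y) : synRel U x y :=
  Quotient.exact h

variable [TopologicalSpace S] [ContinuousMul S] [CompactSpace S]

theorem exists_open_synRel {U : Set S} (hU : IsClopen U) (x : S) :
    ∃ W : Set S, IsOpen W ∧ x ∈ W ∧ ∀ y ∈ W, synRel U x y := by
  classical
  have side : ∀ z : S, ∃ D : Set S, IsOpen D ∧ z ∈ D ∧ ∀ w ∈ D, (w ∈ U ↔ z ∈ U) := by
    intro z
    by_cases hz : z ∈ U
    · exact ⟨U, hU.2, hz, fun w hw => iff_of_true hw hz⟩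
    · exact ⟨Uᶜ, hU.1.isOpen_compl, hz, fun w hw => iff_of_false hw hz⟩
  obtain ⟨W1, hW1o, hxW1, hW1⟩ := side x
  have key2 : ∀ s : S, ∃ (A B : Set S), IsOpen A ∧ IsOpen B ∧ s ∈ A ∧ x ∈ B ∧
      ∀ a ∈ A, ∀ b ∈ B, (a * b ∈ U ↔ s * x ∈ U) := by
    intro s
    obtain ⟨D, hDo, hmem, hside⟩ := side (s * x)
    have hpre : IsOpen ((fun p : S × S => p.1 * p.2) ⁻¹' D) := hDo.preimage continuous_mul
    obtain ⟨A, B, hA, hB, hsA, hxB, hsub⟩ := (isOpen_prod_iff.1 hpre) s x hmem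
    exact ⟨A, B, hA, hB, hsA, hxB, fun a ha b hb => hside _ (hsub (Set.mk_mem_prod ha hb))⟩
  choose A2 B2 hA2 hB2 hsA2 hxB2 hprop2 using key2
  obtain ⟨I2, hI2⟩ := isCompact_univ.elim_finite_subcover A2 hA2
    (fun s _ => Set.mem_iUnion.2 ⟨s, hsA2 s⟩)
  have key3 : ∀ t : S, ∃ (A B : Set S), IsOpen A ∧ IsOpen B ∧ t ∈ A ∧ x ∈ B ∧
      ∀ a ∈ A, ∀ b ∈ B, (b * a ∈ U ↔ x * t ∈ U) := by
    intro t
    obtain ⟨D, hDo, hmem, hside⟩ := side (x * t)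
    have hpre : IsOpen ((fun p : S × S => p.1 * p.2) ⁻¹' D) := hDo.preimage continuous_mul
    obtain ⟨B, A, hB, hA, hxB, htA, hsub⟩ := (isOpen_prod_iff.1 hpre) x t hmem
    exact ⟨A, B, hA, hB, htA, hxB, fun a ha b hb => hside _ (hsub (Set.mk_mem_prod hb ha))⟩
  choose A3 B3 hA3 hB3 htA3 hxB3 hprop3 using key3
  obtain ⟨I3, hI3⟩ := isCompact_univ.elim_finite_subcover A3 hA3
    (fun t _ => Set.mem_iUnion.2 ⟨t, htA3 t⟩)
  have key4 : ∀ p : S × S, ∃ (A : Set (S × S)) (B : Set S), IsOpen A ∧ IsOpen B ∧ p ∈ A ∧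
      x ∈ B ∧ ∀ q ∈ A, ∀ b ∈ B, (q.1 * b * q.2 ∈ U ↔ p.1 * x * p.2 ∈ U) := by
    intro p
    obtain ⟨D, hDo, hmem, hside⟩ := side (p.1 * x * p.2)
    have hcont : Continuous (fun q : (S × S) × S => q.1.1 * q.2 * q.1.2) :=
      ((continuous_fst.comp continuous_fst).mul continuous_snd).mul
        (continuous_snd.comp continuous_fst)
    have hpre : IsOpen ((fun q : (S × S) × S => q.1.1 * q.2 * q.1.2) ⁻¹' D) :=
      hDo.preimage hcont
    obtain ⟨A, B, hA, hB, hpA, hxB, hsub⟩ := (isOpen_prod_iff.1 hpre) p x hmem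
    exact ⟨A, B, hA, hB, hpA, hxB, fun q hq b hb => hside _ (hsub (Set.mk_mem_prod hq hb))⟩
  choose A4 B4 hA4 hB4 hpA4 hxB4 hprop4 using key4
  obtain ⟨I4, hI4⟩ := isCompact_univ.elim_finite_subcover A4 hA4
    (fun p _ => Set.mem_iUnion.2 ⟨p, hpA4 p⟩)
  refine ⟨W1 ∩ ((⋂ s ∈ I2, B2 s) ∩ ((⋂ t ∈ I3, B3 t) ∩ (⋂ p ∈ I4, B4 p))), ?_, ?_, ?_⟩
  · exact hW1o.inter ((isOpen_biInter_finset fun s _ => hB2 s).inter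
      ((isOpen_biInter_finset fun t _ => hB3 t).inter (isOpen_biInter_finset fun p _ => hB4 p)))
  · exact ⟨hxW1, Set.mem_biInter fun s _ => hxB2 s,
      Set.mem_biInter fun t _ => hxB3 t, Set.mem_biInter fun p _ => hxB4 p⟩
  · rintro y ⟨hy1, hy2, hy3, hy4⟩
    refine ⟨(hW1 y hy1).symm, fun s => ?_, fun t => ?_, fun s t => ?_⟩
    · obtain ⟨s₀, hs₀I, hs₀⟩ := Set.mem_iUnion₂.1 (hI2 (Set.mem_univ s))
      exact (hprop2 s₀ s hs₀ x (hxB2 s₀)).trans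
        (hprop2 s₀ s hs₀ y (Set.mem_iInter₂.1 hy2 s₀ hs₀I)).symm
    · obtain ⟨t₀, ht₀I, ht₀⟩ := Set.mem_iUnion₂.1 (hI3 (Set.mem_univ t))
      exact (hprop3 t₀ t ht₀ x (hxB3 t₀)).trans
        (hprop3 t₀ t ht₀ y (Set.mem_iInter₂.1 hy3 t₀ ht₀I)).symm
    · obtain ⟨p₀, hp₀I, hp₀⟩ := Set.mem_iUnion₂.1 (hI4 (Set.mem_univ (s, t)))
      exact (hprop4 p₀ (s, t) hp₀ x (hxB4 p₀)).trans
        (hprop4 p₀ (s, t) hp₀ y (Set.mem_iInter₂.1 hy4 p₀ hp₀I)).symm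

theorem synQuot_finite {U : Set S} (hU : IsClopen U) : Finite (SynQuot U) := by
  classical
  choose W hWo hxW hW using fun x : S => exists_open_synRel hU x
  obtain ⟨I, hI⟩ := isCompact_univ.elim_finite_subcover W hWo
    (fun x _ => Set.mem_iUnion.2 ⟨x, hxW x⟩)
  have : (Set.univ : Set (SynQuot U)) ⊆ (fun x => Quotient.mk (synSetoid U) x) '' I := by
    rintro q -
    obtain ⟨y, rfl⟩ := Quotient.exists_rep q
    obtain ⟨x₀, hx₀I, hx₀⟩ := Set.mem_iUnion₂.1 (hI (Set.mem_univ y))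
    exact ⟨x₀, hx₀I, Quotient.sound (hW x₀ y hx₀)⟩
  exact Set.finite_univ_iff.1 ((I.finite_toSet.image _).subset this)

theorem synMk_isOpen_preimage {U : Set S} (hU : IsClopen U) (V : Set (SynQuot U)) :
    IsOpen ((synMk U) ⁻¹' V) := by
  rw [isOpen_iff_forall_mem_open]
  intro x hx
  obtain ⟨W, hWo, hxW, hW⟩ := exists_open_synRel hU x
  refine ⟨W, fun y hy => ?_, hWo, hxW⟩
  have : synMk U y = synMk U x := Quotient.sound (synRel_symm (hW y hy))
  simpa only [Set.mem_preimage, this] using hx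

omit [TopologicalSpace S] [ContinuousMul S] [CompactSpace S] in
theorem mem_of_synRel {U : Set S} {x y : S} (h : synRel U x y) (hy : y ∈ U) : x ∈ U :=
  h.1.2 hy

end Syn

theorem lLE_of_forall_finite
    (S : Type) [Semigroup S] [TopologicalSpace S] (hS : IsProfiniteSgp S) (u v : S)
    (h : ∀ (T : FinSgp) (f : S →ₙ* T.carrier), Continuous f → Function.Surjective f →
      lLE (f u) (f v)) : lLE u v := by
  obtain ⟨hCM, hCS, hT2, hTD⟩ := hS
  haveI := hCM; haveI := hCS; haveI := hT2; haveI := hTD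
  by_contra hn
  have hn' : u ≠ v ∧ ∀ x : S, u ≠ x * v := by
    constructor
    · exact fun he => hn (Or.inl he)
    · exact fun x he => hn (Or.inr ⟨x, he⟩)
  set D : Set S := {v} ∪ (fun x => x * v) '' Set.univ with hD
  have hDcpt : IsCompact D :=
    isCompact_singleton.union (isCompact_univ.image (continuous_mul_right v))
  have huD : u ∉ D := by
    rintro (h1 | ⟨x, -, hx⟩)
    · exact hn'.1 h1
    · exact hn'.2 x hx.symm
  -- separate u from D by a clopen set containing D
  have hsep : ∀ d : S, d ∈ D → ∃ C : Set S, IsClopen C ∧ d ∈ C ∧ u ∉ C := by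
    intro d hd
    obtain ⟨C, hC, hdC, huC⟩ := exists_isClopen_of_totally_separated
      (show d ≠ u from fun he => huD (he ▸ hd))
    exact ⟨C, hC, hdC, huC⟩
  classical
  choose! C hCclopen hdC huC using hsep
  obtain ⟨I, hI⟩ := hDcpt.elim_finite_subcover (fun d : S => if d ∈ D then C d else ∅)
    (fun d => by
      by_cases hd : d ∈ D
      · simpa [hd] using (hCclopen d hd).2
      · simp [hd])
    (fun d hd => Set.mem_iUnion.2 ⟨d, by simp [hd, hdC d hd]⟩)
  set U : Set S := ⋃ d ∈ I, if d ∈ D then C d else ∅ with hUdef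
  have hUclopen : IsClopen U := by
    apply Set.Finite.isClopen_biUnion I.finite_toSet
    intro d _
    by_cases hd : d ∈ D
    · simpa [hd] using hCclopen d hd
    · simpa [hd] using isClopen_empty
  have hDU : D ⊆ U := hI
  have huU : u ∉ U := by
    intro hu
    obtain ⟨d, -, hd⟩ := Set.mem_iUnion₂.1 hu
    by_cases hdD : d ∈ D
    · rw [if_pos hdD] at hd; exact huC d hdD hd
    · rw [if_neg hdD] at hd; exact hd
  -- the finite quotient
  haveI : Finite (SynQuot U) := synQuot_finite hUclopen
  set T : FinSgp := FinSgp.mk (SynQuot U) with hT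
  have hL := h T (synMk U)
    (continuous_def.2 fun V _ => synMk_isOpen_preimage hUclopen V) (synMk_surjective U)
  rcases hL with he | ⟨t, ht⟩
  · exact huU (mem_of_synRel (synRel_of_eq he) (hDU (Or.inl rfl)))
  · obtain ⟨x, rfl⟩ := synMk_surjective U t
    have : synMk U u = synMk U (x * v) := by rw [ht]; rfl
    exact huU (mem_of_synRel (synRel_of_eq this)
      (hDU (Or.inr ⟨x, Set.mem_univ x, rfl⟩)))


/-- In a profinite semigroup, two elements are Green `L`-related if and
only if their images under every continuous homomorphism onto a finite semigroup are
`L`-related. -/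
theorem greenL_iff_finite_quotients
    (S : Type) [Semigroup S] [TopologicalSpace S] (hS : IsProfiniteSgp S) (u v : S) :
    GreenL u v ↔
      ∀ (T : FinSgp) (f : S →ₙ* T.carrier), Continuous f → Function.Surjective f →
        GreenL (f u) (f v) := by
  constructor
  · rintro ⟨h1, h2⟩ T f _ _
    constructor
    · rcases h1 with he | ⟨x, hx⟩
      · exact Or.inl (congrArg f he)
      · exact Or.inr ⟨f x, by rw [hx, map_mul]⟩
    · rcases h2 with he | ⟨x, hx⟩
      · exact Or.inl (congrArg f he)
      · exact Or.inr ⟨f x, by rw [hx, map_mul]⟩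
  · intro h
    constructor
    · exact lLE_of_forall_finite S hS u v fun T f hc hs => (h T f hc hs).1
    · exact lLE_of_forall_finite S hS v u fun T f hc hs => (h T f hc hs).2
end

section
/- Let S be a profinite semigroup. Then Green's relation L on S is a closed equivalence relation (that is, the set {(u,v) ∈ S × S : u L v} is closed in S × S), and the quotient topological space S/L is compact, Hausdorff, and totally disconnected. -/
/-! Record, for each `s : S`, which clopen sets meet the principal left ideal
`S¹s`. Since `S¹s` is closed and clopens separate points from closed sets in a profinite
space, this record determines `S¹s`, hence the `L`-class of `s`. As `S` is compact, the
set of `s` with `S¹s` meeting a given clopen is again clopen, so the record is a continuous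
map into the Stone space `Clopens S → Bool`, which factors injectively through `S/L`. -/

open Set TopologicalSpace

section ClopenProfile

variable {X : Type*} [TopologicalSpace X]

theorem subset_of_forall_clopens_inter_nonempty [CompactSpace X] [T2Space X]
    [TotallyDisconnectedSpace X] {A B : Set X} (hB : IsClosed B)
    (h : ∀ U : Clopens X, (A ∩ U).Nonempty → (B ∩ U).Nonempty) : A ⊆ B := by
  intro x hxA
  by_contra hxB
  obtain ⟨V, hV, hxV, hVB⟩ := compact_exists_isClopen_in_isOpen hB.isOpen_compl hxB
  obtain ⟨y, hyB, hyV⟩ := h ⟨V, hV⟩ ⟨x, hxA, hxV⟩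
  exact hVB hyV hyB

variable (R : X → X → Prop)

noncomputable def clopenProfile (x : X) (U : Clopens X) : Bool :=
  {y | ∃ u ∈ U, R u y}.boolIndicator x

variable {R}

theorem continuous_clopenProfile (hR : ∀ U : Clopens X, IsClopen {y | ∃ u ∈ U, R u y}) :
    Continuous (clopenProfile R) :=
  continuous_pi fun U => (continuous_boolIndicator_iff_isClopen _).2 (hR U)

theorem clopenProfile_eq_iff [CompactSpace X] [T2Space X] [TotallyDisconnectedSpace X]
    (hR : ∀ x, IsClosed {u | R u x}) {a b : X} :
    clopenProfile R a = clopenProfile R b ↔ {u | R u a} = {u | R u b} := by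
  have profile_eq_iff : clopenProfile R a = clopenProfile R b ↔
      ∀ U : Clopens X, ((∃ u ∈ U, R u a) ↔ (∃ u ∈ U, R u b)) :=
    funext_iff.trans <| forall_congr' fun U => by
      rw [clopenProfile, clopenProfile, Bool.eq_iff_iff, ← mem_iff_boolIndicator,
        ← mem_iff_boolIndicator]
      rfl
  rw [profile_eq_iff]
  constructor
  · intro h
    apply subset_antisymm
    · exact subset_of_forall_clopens_inter_nonempty (hR b) fun U ⟨u, hua, huU⟩ =>
        ((h U).1 ⟨u, huU, hua⟩).imp fun v ⟨hvU, hvb⟩ => ⟨hvb, hvU⟩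
    · exact subset_of_forall_clopens_inter_nonempty (hR a) fun U ⟨u, hub, huU⟩ =>
        ((h U).2 ⟨u, huU, hub⟩).imp fun v ⟨hvU, hva⟩ => ⟨hva, hvU⟩
  · intro h U
    simp only [Set.ext_iff, mem_ofPred_eq] at h
    simp only [h]

end ClopenProfile

section QuotOfSeparatingMap

variable {X Y : Type*} {r : X → X → Prop} {f : X → Y}

theorem injective_quot_lift (hr : ∀ a b, f a = f b ↔ r a b) :
    Function.Injective (Quot.lift f fun a b => (hr a b).2) := fun p q =>
  Quot.induction_on₂ p q fun a b h => Quot.sound ((hr a b).1 h)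

variable [TopologicalSpace X] [TopologicalSpace Y]

theorem t2Space_quot_of_continuous [T2Space Y] (hf : Continuous f)
    (hr : ∀ a b, f a = f b ↔ r a b) : T2Space (Quot r) :=
  .of_injective_continuous (injective_quot_lift hr) (continuous_quot_lift _ hf)

theorem totallyDisconnectedSpace_quot_of_continuous [TotallyDisconnectedSpace Y]
    (hf : Continuous f) (hr : ∀ a b, f a = f b ↔ r a b) : TotallyDisconnectedSpace (Quot r) :=
  ⟨isTotallyDisconnected_of_image (continuous_quot_lift _ hf).continuousOn
    (injective_quot_lift hr) (isTotallyDisconnected_of_totallyDisconnectedSpace _)⟩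

end QuotOfSeparatingMap

section GreenL

variable {S : Type} [Semigroup S]

theorem lLE_refl (u : S) : lLE u u := .inl rfl

theorem lLE_trans {u v w : S} (huv : lLE u v) (hvw : lLE v w) : lLE u w := by
  rcases huv with rfl | ⟨x, rfl⟩
  · exact hvw
  · rcases hvw with rfl | ⟨y, rfl⟩
    · exact .inr ⟨x, rfl⟩
    · exact .inr ⟨x * y, (mul_assoc x y w).symm⟩

theorem greenL_equivalence : Equivalence (GreenL (S := S)) :=
  ⟨fun u => ⟨lLE_refl u, lLE_refl u⟩, fun h => ⟨h.2, h.1⟩,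
    fun huv hvw => ⟨lLE_trans huv.1 hvw.1, lLE_trans hvw.2 huv.2⟩⟩

theorem setOf_lLE_eq_iff {a b : S} : {u | lLE u a} = {u | lLE u b} ↔ GreenL a b := by
  refine ⟨fun h => ⟨?_, ?_⟩, fun h => ?_⟩
  · exact (h ▸ lLE_refl a : a ∈ {u | lLE u b})
  · exact (h ▸ lLE_refl b : b ∈ {u | lLE u a})
  · ext u
    exact ⟨fun hu => lLE_trans hu h.1, fun hu => lLE_trans hu h.2⟩

theorem setOf_exists_lLE_eq (U : Set S) :
    {s | ∃ u ∈ U, lLE u s} = U ∪ {s | ∃ x, x * s ∈ U} := by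
  ext s
  simp only [lLE, mem_ofPred_eq, mem_union]
  constructor
  · rintro ⟨u, hu, rfl | ⟨x, rfl⟩⟩
    exacts [.inl hu, .inr ⟨x, hu⟩]
  · rintro (hs | ⟨x, hx⟩)
    exacts [⟨s, hs, .inl rfl⟩, ⟨x * s, hx, .inr ⟨x, rfl⟩⟩]

variable [TopologicalSpace S] [ContinuousMul S]

theorem isClosed_setOf_lLE [CompactSpace S] [T2Space S] : IsClosed {p : S × S | lLE p.1 p.2} := by
  have graph_eq : {p : S × S | lLE p.1 p.2} =
      diagonal S ∪ range fun q : S × S => (q.1 * q.2, q.2) := by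
    ext ⟨u, v⟩
    simp only [lLE, mem_ofPred_eq, mem_union, mem_diagonal_iff, mem_range, Prod.mk.injEq,
      Prod.exists]
    constructor
    · rintro (rfl | ⟨x, rfl⟩)
      exacts [.inl rfl, .inr ⟨x, v, rfl, rfl⟩]
    · rintro (rfl | ⟨x, v, rfl, rfl⟩)
      exacts [.inl rfl, .inr ⟨x, rfl⟩]
  rw [graph_eq]
  exact isClosed_diagonal.union (isCompact_range (by fun_prop)).isClosed

theorem isClosed_setOf_greenL [CompactSpace S] [T2Space S] :
    IsClosed {p : S × S | GreenL p.1 p.2} :=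
  isClosed_setOf_lLE.inter (isClosed_setOf_lLE.preimage continuous_swap)

theorem IsOpen.setOf_exists_lLE {U : Set S} (hU : IsOpen U) : IsOpen {s | ∃ u ∈ U, lLE u s} := by
  have hmul : {s | ∃ x, x * s ∈ U} = ⋃ x, (x * ·) ⁻¹' U := by ext; simp
  rw [setOf_exists_lLE_eq, hmul]
  exact hU.union (isOpen_iUnion fun x => hU.preimage (continuous_const_mul x))

theorem IsClosed.setOf_exists_lLE [CompactSpace S] {U : Set S} (hU : IsClosed U) :
    IsClosed {s | ∃ u ∈ U, lLE u s} := by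
  have hmul : {s | ∃ x, x * s ∈ U} = Prod.snd '' ((fun p : S × S => p.1 * p.2) ⁻¹' U) := by
    ext; simp
  rw [setOf_exists_lLE_eq, hmul]
  exact hU.union (isClosedMap_snd_of_compactSpace _ (hU.preimage continuous_mul))

end GreenL

/-- In a profinite semigroup, Green's relation `L` is a closed
equivalence relation and the quotient space is compact, Hausdorff and totally
disconnected. -/
theorem greenL_closed_and_quotient_profinite
    (S : Type) [Semigroup S] [TopologicalSpace S] (hS : IsProfiniteSgp S) :
    IsClosed {p : S × S | GreenL p.1 p.2} ∧ Equivalence (GreenL (S := S)) ∧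
      CompactSpace (Quot (GreenL (S := S))) ∧ T2Space (Quot (GreenL (S := S))) ∧
      TotallyDisconnectedSpace (Quot (GreenL (S := S))) := by
  obtain ⟨_, _, _, _⟩ := hS
  have hcont : Continuous (clopenProfile (lLE (S := S))) :=
    continuous_clopenProfile fun U => ⟨U.isClopen.isClosed.setOf_exists_lLE,
      U.isClopen.isOpen.setOf_exists_lLE⟩
  have hfibers : ∀ a b : S, clopenProfile lLE a = clopenProfile lLE b ↔ GreenL a b :=
    fun a b => (clopenProfile_eq_iff fun v =>
      isClosed_setOf_lLE.preimage (.prodMk_left v)).trans setOf_lLE_eq_iff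
  exact ⟨isClosed_setOf_greenL, greenL_equivalence, inferInstance,
    t2Space_quot_of_continuous hcont hfibers,
    totallyDisconnectedSpace_quot_of_continuous hcont hfibers⟩
end

section
/- Let S be a profinite semigroup possessing a minimum ideal K (a two-sided ideal of S contained in every two-sided ideal of S), and suppose K contains exactly one idempotent e. Then e is central in S: e·s = s·e for every s ∈ S. -/
/-- If the minimum ideal of a profinite semigroup contains a unique
idempotent `e`, then `e` is central. -/
theorem unique_minimal_idempotent_central
    (S : Type) [Semigroup S] [TopologicalSpace S] (hS : IsProfiniteSgp S)
    (K : Set S) (hKne : K.Nonempty)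
    (hKideal : ∀ s ∈ K, ∀ t : S, t * s ∈ K ∧ s * t ∈ K)
    (hKmin : ∀ I : Set S, I.Nonempty → (∀ s ∈ I, ∀ t : S, t * s ∈ I ∧ s * t ∈ I) → K ⊆ I)
    (e : S) (heK : e ∈ K) (he : e * e = e)
    (huniq : ∀ f ∈ K, f * f = f → f = e) :
    ∀ s : S, e * s = s * e := by
  obtain ⟨hcm, hcs, ht2, -⟩ := hS
  -- K is closed
  have hKclosed : IsClosed K := by
    have himg : K = (fun p : S × S => p.1 * e * p.2) '' Set.univ := by
      apply Set.Subset.antisymm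
      · refine hKmin _ ⟨e * e * e, ⟨(e, e), trivial, rfl⟩⟩ ?_
        rintro m ⟨⟨x, y⟩, -, rfl⟩ t
        constructor
        · exact ⟨(t * x, y), trivial, by simp [mul_assoc]⟩
        · exact ⟨(x, y * t), trivial, by simp [mul_assoc]⟩
      · rintro m ⟨⟨x, y⟩, -, rfl⟩
        exact (hKideal _ (hKideal e heK x).1 y).2
    rw [himg]
    exact (isCompact_univ.image (by fun_prop)).isClosed
  -- e is a two-sided identity on K
  have hid : ∀ k ∈ K, e * k = k ∧ k * e = k := by
    intro k hk
    obtain ⟨x, hx, y, hy, hxy⟩ : ∃ x ∈ K, ∃ y ∈ K, x * k * y = k := by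
      refine hKmin {m | ∃ x ∈ K, ∃ y ∈ K, x * k * y = m} ⟨k * k * k, k, hk, k, hk, rfl⟩ ?_ hk
      rintro m ⟨x, hx, y, hy, rfl⟩ t
      exact ⟨⟨t * x, (hKideal x hx t).1, y, hy, by simp [mul_assoc]⟩,
             ⟨x, hx, y * t, (hKideal y hy t).2, by simp [mul_assoc]⟩⟩
    -- the compact subsemigroup of S × Sᵐᵒᵖ
    haveI : CompactSpace Sᵐᵒᵖ := MulOpposite.opHomeomorph.compactSpace
    set C : Set (S × Sᵐᵒᵖ) := {p | p.1 ∈ K ∧ p.2.unop ∈ K ∧ p.1 * k * p.2.unop = k} with hC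
    have hCclosed : IsClosed C := by
      apply IsClosed.inter (hKclosed.preimage continuous_fst)
      apply IsClosed.inter (hKclosed.preimage (MulOpposite.continuous_unop.comp continuous_snd))
      exact isClosed_eq (by fun_prop) continuous_const
    have hCmul : ∀ a ∈ C, ∀ b ∈ C, a * b ∈ C := by
      rintro ⟨a1, a2⟩ ⟨ha1, ha2, ha3⟩ ⟨b1, b2⟩ ⟨hb1, hb2, hb3⟩
      refine ⟨(hKideal b1 hb1 a1).1, ?_, ?_⟩
      · show (a2 * b2).unop ∈ K
        rw [MulOpposite.unop_mul]
        exact (hKideal a2.unop ha2 b2.unop).1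
      · show a1 * b1 * k * (a2 * b2).unop = k
        rw [MulOpposite.unop_mul]
        calc a1 * b1 * k * (b2.unop * a2.unop)
            = a1 * (b1 * k * b2.unop) * a2.unop := by simp [mul_assoc]
          _ = k := by rw [hb3, ha3]
    obtain ⟨⟨m1, m2⟩, ⟨hm1, hm2, hm3⟩, hmm⟩ :=
      exists_idempotent_in_compact_subsemigroup (fun r => continuous_mul_right r) C
        ⟨(x, MulOpposite.op y), hx, hy, hxy⟩ hCclosed.isCompact hCmul
    have h1 : m1 * m1 = m1 := congrArg Prod.fst hmm
    have h2 : m2.unop * m2.unop = m2.unop := by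
      have h := congrArg Prod.snd hmm
      simpa using congrArg MulOpposite.unop h
    have he1 : m1 = e := huniq m1 hm1 h1
    have he2 : m2.unop = e := huniq m2.unop hm2 h2
    rw [he1, he2] at hm3
    constructor
    · calc e * k = e * (e * k * e) := by rw [hm3]
        _ = e * k * e := by rw [← mul_assoc, ← mul_assoc, he]
        _ = k := hm3
    · calc k * e = e * k * e * e := by rw [hm3]
        _ = e * k * e := by rw [mul_assoc, he]
        _ = k := hm3
  intro s
  have h1 := (hid _ (hKideal e heK s).2).2  -- (e*s)*e = e*s
  have h2 := (hid _ (hKideal e heK s).1).1  -- e*(s*e) = s*e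
  calc e * s = e * s * e := h1.symm
    _ = e * (s * e) := mul_assoc _ _ _
    _ = s * e := h2
end

section
/- Let S be a profinite semigroup and let φ : S → N be a continuous semigroup homomorphism into a finite nilpotent semigroup N with zero element 0, such that the closed subsemigroup φ⁻¹(0) is locally countable. Then S is locally countable; moreover, if S is topologically generated by a finite subset, then φ⁻¹(0) is topologically generated by a finite subset, and S is countable. -/
section ProdFromAux

variable {S : Type} [Semigroup S]

theorem prodFrom_congr {f g : ℕ → S} {k : ℕ} (h : ∀ i ≤ k, f i = g i) :
    prodFrom f k = prodFrom g k := by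
  induction k with
  | zero => exact h 0 le_rfl
  | succ k ih =>
    show prodFrom f k * f (k + 1) = prodFrom g k * g (k + 1)
    rw [ih fun i hi => h i (hi.trans (Nat.le_succ k)), h (k + 1) le_rfl]

theorem prodFrom_split (f : ℕ → S) (j l : ℕ) :
    prodFrom f (j + 1 + l) = prodFrom f j * prodFrom (fun i => f (j + 1 + i)) l := by
  induction l with
  | zero => rfl
  | succ l ih =>
    show prodFrom f (j + 1 + l) * f (j + 1 + l + 1) = _
    rw [ih, mul_assoc]
    show _ = prodFrom f j * (prodFrom (fun i => f (j + 1 + i)) l * f (j + 1 + (l + 1)))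
    congr 2

theorem map_prodFrom {N : Type} [Semigroup N] (φ : S →ₙ* N) (f : ℕ → S) (k : ℕ) :
    φ (prodFrom f k) = prodFrom (fun i => φ (f i)) k := by
  induction k with
  | zero => rfl
  | succ k ih =>
    show φ (prodFrom f k * f (k + 1)) = prodFrom (fun i => φ (f i)) k * φ (f (k + 1))
    rw [map_mul, ih]

/-- `prods A k` : products of `k+1` elements of `A`. -/
def prods (A : Set S) (k : ℕ) : Set S :=
  {s | ∃ f : ℕ → S, (∀ i, f i ∈ A) ∧ s = prodFrom f k}

theorem prods_finite {A : Set S} (hA : A.Finite) (k : ℕ) : (prods A k).Finite := by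
  induction k with
  | zero => exact hA.subset fun s ⟨f, hf, hs⟩ => hs ▸ hf 0
  | succ k ih =>
    refine (ih.image2 (· * ·) hA).subset ?_
    rintro s ⟨f, hf, rfl⟩
    exact Set.mem_image2_of_mem ⟨f, hf, rfl⟩ (hf (k + 1))

theorem mem_prods_mul {A : Set S} {s t : S} {j l : ℕ}
    (hs : s ∈ prods A j) (ht : t ∈ prods A l) : s * t ∈ prods A (j + 1 + l) := by
  obtain ⟨f, hf, rfl⟩ := hs
  obtain ⟨g, hg, rfl⟩ := ht
  refine ⟨fun i => if i ≤ j then f i else g (i - (j + 1)), fun i => ?_, ?_⟩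
  · dsimp only
    split
    · exact hf i
    · exact hg _
  · rw [prodFrom_split _ j l]
    congr 1
    · exact prodFrom_congr fun i hi => by simp [hi]
    · refine prodFrom_congr fun i _ => ?_
      have h1 : ¬ j + 1 + i ≤ j := by omega
      have h2 : j + 1 + i - (j + 1) = i := by omega
      simp [h1, h2]

theorem prods_subset_closure (A : Set S) (k : ℕ) :
    prods A k ⊆ (Subsemigroup.closure A : Subsemigroup S) := by
  induction k with
  | zero =>
    rintro s ⟨f, hf, rfl⟩
    exact Subsemigroup.subset_closure (hf 0)
  | succ k ih =>
    rintro s ⟨f, hf, rfl⟩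
    exact Subsemigroup.mul_mem _ (ih ⟨f, hf, rfl⟩) (Subsemigroup.subset_closure (hf (k + 1)))

theorem closure_subset_iUnion_prods (A : Set S) :
    ((Subsemigroup.closure A : Subsemigroup S) : Set S) ⊆ ⋃ k, prods A k := by
  intro x hx
  induction hx using Subsemigroup.closure_induction with
  | mem x hx => exact Set.mem_iUnion.mpr ⟨0, fun _ => x, fun _ => hx, rfl⟩
  | mul x y hx hy ihx ihy =>
    obtain ⟨j, hj⟩ := Set.mem_iUnion.mp ihx
    obtain ⟨l, hl⟩ := Set.mem_iUnion.mp ihy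
    exact Set.mem_iUnion.mpr ⟨j + 1 + l, mem_prods_mul hj hl⟩

end ProdFromAux

/-- If `φ : S → N` is a continuous homomorphism from a profinite
semigroup to a finite nilpotent semigroup with zero `z` and `φ⁻¹(z)` is locally
countable, then `S` is locally countable; moreover, if `S` is finitely (topologically)
generated, then so is `φ⁻¹(z)`, and `S` is countable. -/
theorem locallyCountable_of_nilpotent_quotient
    (S : Type) [Semigroup S] [TopologicalSpace S] (hS : IsProfiniteSgp S)
    (N : Type) [Semigroup N] [Finite N] [TopologicalSpace N] [DiscreteTopology N]
    (z : N) (hz : ∀ x : N, z * x = z ∧ x * z = z)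
    (hnil : ∃ n : ℕ, ∀ f : ℕ → N, prodFrom f n = z)
    (φ : S →ₙ* N) (hφ : Continuous φ)
    (hfib : IsLocCountable ↥(idemFiber φ z (hz z).1)) :
    IsLocCountable S ∧
      ∀ A : Set S, A.Finite → TopGen S A →
        (∃ B : Set ↥(idemFiber φ z (hz z).1), B.Finite ∧
          TopGen ↥(idemFiber φ z (hz z).1) B) ∧ Countable S := by
  obtain ⟨hmul, hcomp, ht2, htd⟩ := hS
  haveI := ht2
  obtain ⟨n, hn⟩ := hnil
  set K := idemFiber φ z (hz z).1 with hKdef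
  have hKc : IsClosed (K : Set S) := isClosed_singleton.preimage hφ
  have hval : Topology.IsClosedEmbedding (Subtype.val : ↥K → S) :=
    Topology.IsClosedEmbedding.subtypeVal hKc
  -- products of length ≥ n+1 map to z
  have hz' : ∀ (g : ℕ → N) (k : ℕ), n ≤ k → prodFrom g k = z := by
    intro g k hk
    induction k, hk using Nat.le_induction with
    | base => exact hn g
    | succ k hk ih =>
      show prodFrom g k * g (k + 1) = z
      rw [ih]
      exact (hz _).1
  -- key decomposition
  have key : ∀ A : Set S, A.Finite →
      ∃ F B : Set S, F.Finite ∧ B.Finite ∧ B ⊆ (K : Set S) ∧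
        closure ((Subsemigroup.closure A : Subsemigroup S) : Set S)
          ⊆ F ∪ closure ((Subsemigroup.closure B : Subsemigroup S) : Set S) := by
    intro A hA
    set F := ⋃ k ∈ Set.Iio n, prods A k with hF
    set B := ⋃ k ∈ Set.Icc n (2 * n + 1), prods A k with hB
    have hFfin : F.Finite := (Set.finite_Iio n).biUnion fun k _ => prods_finite hA k
    have hBfin : B.Finite := (Set.finite_Icc _ _).biUnion fun k _ => prods_finite hA k
    have hBK : B ⊆ (K : Set S) := by
      intro s hs
      simp only [hB, Set.mem_iUnion] at hs
      obtain ⟨k, hk, f, hf, rfl⟩ := hs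
      show φ (prodFrom f k) = z
      rw [map_prodFrom]
      exact hz' _ k (Set.mem_Icc.mp hk).1
    have hBcl : ∀ k, n ≤ k →
        prods A k ⊆ (Subsemigroup.closure B : Subsemigroup S) := by
      intro k
      induction k using Nat.strong_induction_on with
      | _ k ih =>
        intro hk s hs
        by_cases hk2 : k ≤ 2 * n + 1
        · exact Subsemigroup.subset_closure
            (Set.mem_biUnion (Set.mem_Icc.mpr ⟨hk, hk2⟩) hs)
        · obtain ⟨f, hf, rfl⟩ := hs
          have hksplit : k = n + 1 + (k - n - 1) := by omega
          rw [hksplit, prodFrom_split]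
          refine Subsemigroup.mul_mem _ ?_ ?_
          · exact Subsemigroup.subset_closure
              (Set.mem_biUnion (Set.mem_Icc.mpr ⟨le_rfl, by omega⟩) ⟨f, hf, rfl⟩)
          · exact ih (k - n - 1) (by omega) (by omega) ⟨_, fun i => hf _, rfl⟩
    refine ⟨F, B, hFfin, hBfin, hBK, ?_⟩
    have h1 : ((Subsemigroup.closure A : Subsemigroup S) : Set S)
        ⊆ F ∪ ((Subsemigroup.closure B : Subsemigroup S) : Set S) := by
      intro x hx
      obtain ⟨k, hk⟩ := Set.mem_iUnion.mp (closure_subset_iUnion_prods A hx)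
      by_cases h : k < n
      · exact Or.inl (Set.mem_biUnion h hk)
      · exact Or.inr (hBcl k (le_of_not_gt h) hk)
    calc closure ((Subsemigroup.closure A : Subsemigroup S) : Set S)
        ⊆ closure (F ∪ ((Subsemigroup.closure B : Subsemigroup S) : Set S)) :=
          closure_mono h1
      _ ⊆ F ∪ closure ((Subsemigroup.closure B : Subsemigroup S) : Set S) := by
          rw [closure_union, hFfin.isClosed.closure_eq]
  -- transfer to the fiber
  have key2 : ∀ B : Set S, B ⊆ (K : Set S) →
      closure ((Subsemigroup.closure B : Subsemigroup S) : Set S)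
        = Subtype.val ''
          closure ((Subsemigroup.closure (Subtype.val ⁻¹' B : Set ↥K) : Subsemigroup ↥K) : Set ↥K) := by
    intro B hBK
    have himg : Subtype.val '' (Subtype.val ⁻¹' B : Set ↥K) = B := by
      apply Set.image_preimage_eq_of_subset
      rwa [Subtype.range_coe_subtype]
    have hmap : ((Subsemigroup.closure B : Subsemigroup S) : Set S)
        = Subtype.val ''
          ((Subsemigroup.closure (Subtype.val ⁻¹' B : Set ↥K) : Subsemigroup ↥K) : Set ↥K) := by
      have := MulHom.map_mclosure (MulMemClass.subtype K) (Subtype.val ⁻¹' B : Set ↥K)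
      rw [show ⇑(MulMemClass.subtype K) = (Subtype.val : ↥K → S) from rfl, himg] at this
      rw [← this, Subsemigroup.coe_map]
      rfl
    rw [hmap, (hval.closure_image_eq _).symm]
  have hloc : IsLocCountable S := by
    intro A hA
    obtain ⟨F, B, hFf, hBf, hBK, hsub⟩ := key A hA
    rw [key2 B hBK] at hsub
    have hcnt : (Subtype.val ''
        closure ((Subsemigroup.closure (Subtype.val ⁻¹' B : Set ↥K) : Subsemigroup ↥K) : Set ↥K)).Countable :=
      (hfib _ (hBf.preimage Subtype.val_injective.injOn)).image _
    exact (hFf.countable.union hcnt).mono hsub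
  refine ⟨hloc, fun A hA hgen => ?_⟩
  have hgen' : closure ((Subsemigroup.closure A : Subsemigroup S) : Set S) = Set.univ := hgen
  obtain ⟨F, B, hFf, hBf, hBK, hsub⟩ := key A hA
  have heq := key2 B hBK
  constructor
  · refine ⟨Subtype.val ⁻¹' (F ∪ B), (hFf.union hBf).preimage Subtype.val_injective.injOn, ?_⟩
    show closure ((Subsemigroup.closure (Subtype.val ⁻¹' (F ∪ B) : Set ↥K) : Subsemigroup ↥K) : Set ↥K)
      = Set.univ
    apply Set.eq_univ_of_forall
    intro x
    have hx : (x : S) ∈ closure ((Subsemigroup.closure A : Subsemigroup S) : Set S) := by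
      rw [hgen']; trivial
    rcases hsub hx with hxF | hxB
    · exact subset_closure (Subsemigroup.subset_closure (Or.inl hxF))
    · rw [heq] at hxB
      obtain ⟨y, hy, hxy⟩ := hxB
      have hyx : y = x := Subtype.val_injective hxy
      rw [← hyx]
      refine closure_mono ?_ hy
      exact SetLike.coe_subset_coe.mpr
        (Subsemigroup.closure_mono (Set.preimage_mono Set.subset_union_right))
  · have hc := hloc A hA
    rw [hgen'] at hc
    exact Set.countable_univ_iff.mp hc
end

section
/- There exists a locally finite pseudovariety V of finite semigroups such that the Mal'cev product V ⓜ N is not locally countable, where N is the pseudovariety of all finite nilpotent semigroups. -/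
/-!
Let `V` consist of the finite semigroups in which a product `x₀ ⋯ xₙ` depends only on `x₀`, `xₙ`
and the set of consecutive pairs `(xᵢ, xᵢ₊₁)`. These data take finitely many values on products
of elements of a finite set `A`, so in a pro-`V` semigroup the subsemigroup generated by `A` is
finite, hence closed: `V` is locally finite.

For each `k`, send a nonempty word over `{a, b} = {true, false}` to its length truncated at
`k + 1` (a nilpotent quotient) together with its action on an automaton detecting the factor
`a bᵏ a`. Words longer than `k` act by maps with at most one value besides the sink, and
products of such maps are determined by the data above, so the image of the words lies in
`V ⓜ N`. In the product over all `k`, the words made of blocks `a bᵖ a bᵐ⁺¹` for `p ∈ P`,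
`p ≤ m`, converge as `m → ∞`, and the limits for different `P ⊆ ℕ` are different. So the closed
subsemigroup generated by `a` and `b` is an uncountable pro-`(V ⓜ N)` semigroup.
-/

section EdgeDetermined

variable {S T : Type} [Semigroup S] [Semigroup T]

def edgeSet {α : Type} (x : ℕ → α) (k : ℕ) : Set (α × α) :=
  (fun i => (x i, x (i + 1))) '' Set.Iio k

def edgeData {α : Type} (x : ℕ → α) (k : ℕ) : α × α × Set (α × α) :=
  (x 0, x k, edgeSet x k)

theorem edgeData_comp {α β : Type} (f : α → β) {x y : ℕ → α} {k l : ℕ}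
    (h : edgeData x k = edgeData y l) : edgeData (f ∘ x) k = edgeData (f ∘ y) l := by
  have hmap : ∀ (z : ℕ → α) (n : ℕ), edgeSet (f ∘ z) n = Prod.map f f '' edgeSet z n :=
    fun z n => by simp only [edgeSet, Set.image_image, Function.comp_apply, Prod.map_apply]
  simp only [edgeData, Prod.mk.injEq] at h ⊢
  obtain ⟨h0, hk, he⟩ := h
  exact ⟨congrArg f h0, congrArg f hk, by rw [hmap, hmap, he]⟩

theorem map_prodFrom_s16 (f : S →ₙ* T) (x : ℕ → S) :
    ∀ k, f (prodFrom x k) = prodFrom (f ∘ x) k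
  | 0 => rfl
  | k + 1 => by rw [prodFrom, map_mul, map_prodFrom_s16 f x k]; rfl

def EdgeDetermined (S : Type) [Semigroup S] : Prop :=
  ∀ (x y : ℕ → S) (k l : ℕ), edgeData x k = edgeData y l → prodFrom x k = prodFrom y l

theorem EdgeDetermined.map_eq (hT : EdgeDetermined T) (f : S →ₙ* T) {x y : ℕ → S}
    {k l : ℕ} (h : edgeData x k = edgeData y l) : f (prodFrom x k) = f (prodFrom y l) := by
  rw [map_prodFrom_s16, map_prodFrom_s16]
  exact hT _ _ _ _ (edgeData_comp f h)

theorem EdgeDetermined.of_injective (hT : EdgeDetermined T) (f : S →ₙ* T)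
    (hf : Function.Injective f) : EdgeDetermined S :=
  fun _ _ _ _ h => hf (hT.map_eq f h)

theorem EdgeDetermined.of_surjective (hS : EdgeDetermined S) (f : S →ₙ* T)
    (hf : Function.Surjective f) : EdgeDetermined T := by
  intro x y k l h
  obtain ⟨g, hg⟩ := hf.hasRightInverse
  have hx : x = f ∘ (g ∘ x) := funext fun i => (hg (x i)).symm
  have hy : y = f ∘ (g ∘ y) := funext fun i => (hg (y i)).symm
  rw [hx, hy, ← map_prodFrom_s16, ← map_prodFrom_s16, hS _ _ _ _ (edgeData_comp g h)]

theorem EdgeDetermined.prod (hS : EdgeDetermined S) (hT : EdgeDetermined T) :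
    EdgeDetermined (S × T) :=
  fun _ _ _ _ h => Prod.ext (hS.map_eq (MulHom.fst S T) h) (hT.map_eq (MulHom.snd S T) h)

theorem EdgeDetermined.of_isProV {V : Set FinSgp} (hV : ∀ T ∈ V, EdgeDetermined T.carrier)
    [TopologicalSpace S] (hS : IsProV V S) : EdgeDetermined S := by
  intro x y k l h
  by_contra hne
  obtain ⟨T, f, hT, -, -, hf⟩ := hS.2 _ _ hne
  exact hf ((hV T hT).map_eq f h)

theorem prodFrom_congr_s16 {x y : ℕ → S} :
    ∀ {k}, (∀ i ≤ k, x i = y i) → prodFrom x k = prodFrom y k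
  | 0, h => h 0 le_rfl
  | k + 1, h => by
    rw [prodFrom, prodFrom, prodFrom_congr_s16 fun i hi => h i (by omega), h (k + 1) le_rfl]

theorem prodFrom_append (x y : ℕ → S) (k : ℕ) : ∀ m,
    prodFrom (fun i => if i ≤ k then x i else y (i - (k + 1))) (k + 1 + m) =
      prodFrom x k * prodFrom y m
  | 0 => by
    rw [add_zero, prodFrom.eq_2, prodFrom_congr_s16 fun i hi => if_pos hi, if_neg (by omega),
      Nat.sub_self]
    rfl
  | m + 1 => by
    rw [← add_assoc, prodFrom.eq_2, prodFrom_append x y k m, if_neg (by omega), prodFrom.eq_2,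
      mul_assoc]
    congr 3
    omega

theorem exists_prodFrom_of_mem_closure {A : Set S} {s : S} (hs : s ∈ Subsemigroup.closure A) :
    ∃ (x : ℕ → S) (k : ℕ), (∀ i, x i ∈ A) ∧ prodFrom x k = s := by
  induction hs using Subsemigroup.closure_induction with
  | mem a ha => exact ⟨fun _ => a, 0, fun _ => ha, rfl⟩
  | mul _ _ _ _ ha hb =>
    obtain ⟨x, k, hx, rfl⟩ := ha
    obtain ⟨y, m, hy, rfl⟩ := hb
    refine ⟨_, k + 1 + m, fun i => ?_, prodFrom_append x y k m⟩
    split_ifs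
    exacts [hx i, hy _]

theorem EdgeDetermined.finite_closure (hS : EdgeDetermined S) {A : Set S} (hA : A.Finite) :
    (Subsemigroup.closure A : Set S).Finite := by
  let words (d : S × S × Set (S × S)) : Set S :=
    {s | ∃ (x : ℕ → S) (k : ℕ), (∀ i, x i ∈ A) ∧ edgeData x k = d ∧ prodFrom x k = s}
  have hdata : (A ×ˢ A ×ˢ {E | E ⊆ A ×ˢ A}).Finite :=
    hA.prod (hA.prod (hA.prod hA).finite_subsets)
  refine (hdata.biUnion fun d _ => Set.Subsingleton.finite (s := words d) ?_).subset ?_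
  · rintro _ ⟨x, k, -, hx, rfl⟩ _ ⟨y, l, -, hy, rfl⟩
    exact hS x y k l (hx.trans hy.symm)
  · intro s hs
    obtain ⟨x, k, hx, rfl⟩ := exists_prodFrom_of_mem_closure hs
    refine Set.mem_biUnion (x := edgeData x k) ⟨hx 0, hx k, ?_⟩ ⟨x, k, hx, rfl, rfl⟩
    rintro _ ⟨i, -, rfl⟩
    exact ⟨hx i, hx (i + 1)⟩

end EdgeDetermined

def edgeDetermined : Set FinSgp := {S | EdgeDetermined S.carrier}

theorem isPseudovariety_edgeDetermined : IsPseudovariety edgeDetermined :=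
  ⟨fun _ hS _ f hf => hS.of_surjective f hf, fun _ hS _ f hf => hS.of_injective f hf,
    fun _ hS _ hT => hS.prod hT⟩

theorem locallyFinite_edgeDetermined : PVLocallyFinite edgeDetermined := by
  rintro S _ _ hS ⟨A, hA, hgen⟩
  have hfin := (EdgeDetermined.of_isProV (fun _ hT => hT) hS).finite_closure hA
  have : T2Space S := hS.1.2.2.1
  rw [TopGen, hfin.isClosed.closure_eq] at hgen
  rw [hgen] at hfin
  exact Set.finite_univ_iff.mp hfin

section AlmostConst

variable {α : Type}

def IsAlmostConst (g : Option α → Option α) : Prop :=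
  g none = none ∧ ∃ c, ∀ q, g q = none ∨ g q = c

theorem IsAlmostConst.comp {f g : Option α → Option α} (hf : f none = none)
    (hg : IsAlmostConst g) : IsAlmostConst (f ∘ g) := by
  obtain ⟨h0, c, hc⟩ := hg
  refine ⟨by simp [h0, hf], f c, fun q => ?_⟩
  rcases hc q with h | h <;> simp [h, hf]

theorem IsAlmostConst.apply_eq_none_iff {f g : Option α → Option α} (hf : f none = none)
    (hg : IsAlmostConst g) {q : Option α} (hq : g q ≠ none) :
    f (g q) = none ↔ f ∘ g = fun _ => none := by
  refine ⟨fun h => funext fun r => ?_, fun h => congrFun h q⟩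
  obtain ⟨-, c, hc⟩ := hg
  rcases hc r with hr | hr
  · simp [hr, hf]
  · rw [Function.comp_apply, hr, ← (hc q).resolve_left hq, h]

variable {x y : ℕ → Function.End (Option α)}

theorem prodFrom_apply_eq_none_iff (hx : ∀ i, IsAlmostConst (x i)) : ∀ k q,
    prodFrom x k q = none ↔ x k q = none ∨ ∃ i < k, x i * x (i + 1) = fun _ => none
  | 0, q => by simp [prodFrom]
  | k + 1, q => by
    change prodFrom x k (x (k + 1) q) = none ↔ _
    rw [prodFrom_apply_eq_none_iff hx k]
    by_cases hq : x (k + 1) q = none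
    · simp [hq, (hx k).1]
    · rw [(hx (k + 1)).apply_eq_none_iff (hx k).1 hq, ← Function.End.mul_def]
      grind

theorem prodFrom_apply_mem_range : ∀ k q, prodFrom x k q ∈ Set.range (x 0)
  | 0, q => ⟨q, rfl⟩
  | k + 1, _ => prodFrom_apply_mem_range k _

theorem prodFrom_eq_of_isAlmostConst (hx : ∀ i, IsAlmostConst (x i))
    (hy : ∀ i, IsAlmostConst (y i)) {k l : ℕ} (h : edgeData x k = edgeData y l) :
    prodFrom x k = prodFrom y l := by
  simp only [edgeData, Prod.mk.injEq] at h
  obtain ⟨h0, hk, he⟩ := h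
  have hzero : ∀ (z : ℕ → Function.End (Option α)) n,
      (∃ i < n, z i * z (i + 1) = fun _ => none) ↔
        ∃ p ∈ edgeSet z n, p.1 * p.2 = fun _ => none :=
    fun z n => by simp [edgeSet]
  funext q
  have hnone : prodFrom x k q = none ↔ prodFrom y l q = none := by
    rw [prodFrom_apply_eq_none_iff hx, prodFrom_apply_eq_none_iff hy, hk, hzero, hzero, he]
  obtain ⟨r, hr⟩ := prodFrom_apply_mem_range (x := x) k q
  obtain ⟨r', hr'⟩ := prodFrom_apply_mem_range (x := y) l q
  -- both sides take values in `{none, c}`, where `c` is the value of `x 0 = y 0` besides `none`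
  obtain ⟨-, c, hc⟩ := hx 0
  by_cases hn : prodFrom x k q = none
  · rw [hn, hnone.1 hn]
  · have hn' := mt hnone.2 hn
    rw [← hr, ← hr', ← h0] at *
    rw [(hc r).resolve_left hn, (hc r').resolve_left hn']

end AlmostConst

theorem EdgeDetermined.of_injective_isAlmostConst {S α : Type} [Semigroup S]
    (f : S →ₙ* Function.End (Option α)) (hf : Function.Injective f)
    (hac : ∀ s, IsAlmostConst (f s)) : EdgeDetermined S := fun _ _ _ _ h =>
  hf <| by
    rw [map_prodFrom_s16, map_prodFrom_s16]
    exact prodFrom_eq_of_isAlmostConst (fun _ => hac _) (fun _ => hac _) (edgeData_comp f h)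

/-- Nonempty words up to their length: `⟨i, _⟩` stands for length `i + 1`, and `⟨k, _⟩` for
every length beyond `k`. -/
@[ext]
structure NilTrunc (k : ℕ) where
  val : ℕ
  val_le : val ≤ k

namespace NilTrunc

variable {k : ℕ}

instance : Semigroup (NilTrunc k) where
  mul a b := ⟨min (a.val + b.val + 1) k, min_le_right _ _⟩
  mul_assoc a b c := NilTrunc.ext <|
    show min (min (a.val + b.val + 1) k + c.val + 1) k =
      min (a.val + min (b.val + c.val + 1) k + 1) k by omega

theorem val_mul (a b : NilTrunc k) : (a * b).val = min (a.val + b.val + 1) k := rfl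

instance : Finite (NilTrunc k) :=
  Finite.of_injective (fun a => (⟨a.val, Nat.lt_succ_of_le a.val_le⟩ : Fin (k + 1)))
    fun _ _ h => NilTrunc.ext (congrArg Fin.val h)

def zero (k : ℕ) : NilTrunc k := ⟨k, le_rfl⟩

theorem eq_zero_of_le {a : NilTrunc k} (h : k ≤ a.val) : a = zero k :=
  NilTrunc.ext (le_antisymm a.val_le h)

theorem isNilpotentSgp : IsNilpotentSgp (NilTrunc k) := by
  have hprod : ∀ (f : ℕ → NilTrunc k) n, min n k ≤ (prodFrom f n).val := fun f n => by
    induction n with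
    | zero => exact (min_le_left 0 k).trans (Nat.zero_le _)
    | succ n ih => rw [prodFrom.eq_2, val_mul]; omega
  refine ⟨zero k, fun a => ⟨eq_zero_of_le ?_, eq_zero_of_le ?_⟩, k,
    fun f => eq_zero_of_le ((min_self k).symm.le.trans (hprod f k))⟩ <;>
  · simp only [val_mul, zero]; omega

theorem eq_zero_of_mul_self {e : NilTrunc k} (he : e * e = e) : e = zero k :=
  eq_zero_of_le (by have := congrArg val he; rw [val_mul] at this; omega)

def lengthHom (α : Type) (k : ℕ) : FreeSemigroup α →ₙ* NilTrunc k where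
  toFun w := ⟨min w.tail.length k, min_le_right _ _⟩
  map_mul' x y := NilTrunc.ext (by rw [val_mul]; simp; omega)

theorem lengthHom_eq_zero_iff {α : Type} {w : FreeSemigroup α} :
    lengthHom α k w = zero k ↔ k ≤ w.tail.length := by
  simp [lengthHom, zero, NilTrunc.ext_iff]

end NilTrunc

/-- States of the automaton that reads words from right to left and detects the factor
`a bᵏ a`: `some i` with `i ≤ k` records `i` letters `b` read since the last `a`, `some (k + 1)`
records that no `a` is pending, and `none` is the sink entered once the factor has been read. -/
abbrev CounterState (k : ℕ) : Type := Option (Fin (k + 2))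

namespace CounterState

variable {k : ℕ}

def step (k : ℕ) : Bool → CounterState k → CounterState k
  | _, none => none
  | true, some i => if (i : ℕ) = k then none else some 0
  | false, some i => some ⟨min (i + 1) (k + 1), by omega⟩

def run (k : ℕ) (w : List Bool) (q : CounterState k) : CounterState k := w.foldr (step k) q

theorem run_cons (c : Bool) (w : List Bool) (q : CounterState k) :
    run k (c :: w) q = step k c (run k w q) := rfl

theorem run_append (u v : List Bool) (q : CounterState k) :
    run k (u ++ v) q = run k u (run k v q) := List.foldr_append ..

theorem run_none (w : List Bool) : run k w none = none := by
  induction w with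
  | nil => rfl
  | cons c w ih => rw [run_cons, ih, step]

theorem run_replicate_false (j : ℕ) (i : Fin (k + 2)) :
    run k (List.replicate j false) (some i) = some ⟨min (i + j) (k + 1), by omega⟩ := by
  induction j with
  | zero => simp [run, Nat.min_eq_left (Nat.lt_succ_iff.1 i.2)]
  | succ j ih => rw [List.replicate_succ, run_cons, ih, step]; simp; omega

theorem isAlmostConst_run_of_mem {w : List Bool} (hw : true ∈ w) : IsAlmostConst (run k w) := by
  induction w with
  | nil => exact absurd hw List.not_mem_nil
  | cons c w ih =>
    have hrun : run k (c :: w) = step k c ∘ run k w := rfl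
    cases c with
    | false => exact hrun ▸ (ih (by simpa using hw)).comp rfl
    | true =>
      refine ⟨by rw [run_cons, run_none, step], some 0, fun q => ?_⟩
      rw [run_cons]
      rcases run k w q with _ | i
      · exact .inl rfl
      · by_cases hi : (i : ℕ) = k <;> simp [step, hi]

theorem isAlmostConst_run {w : List Bool} (hw : k + 1 ≤ w.length) : IsAlmostConst (run k w) := by
  by_cases htrue : true ∈ w
  · exact isAlmostConst_run_of_mem htrue
  have hrep : w = List.replicate w.length false :=
    List.eq_replicate_iff.2 ⟨rfl, fun b hb => by cases b; rfl; exact absurd hb htrue⟩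
  refine ⟨run_none w, some (Fin.last (k + 1)), fun q => ?_⟩
  rcases q with _ | i
  · exact .inl (run_none w)
  · rw [hrep, run_replicate_false]
    exact .inr (congrArg some (Fin.ext (by simp; omega)))

def block (m p : ℕ) : List Bool :=
  true :: (List.replicate p false ++ true :: List.replicate (m + 1) false)

theorem run_block_eq_none_iff {m : ℕ} (hm : k ≤ m) (p : ℕ) (i : Fin (k + 2)) :
    run k (block m p) (some i) = none ↔ p = k := by
  rw [block, run_cons, run_append, run_cons, run_replicate_false]
  have hidle : (⟨min (i + (m + 1)) (k + 1), by omega⟩ : Fin (k + 2)) = Fin.last (k + 1) :=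
    Fin.ext (by simp; omega)
  rw [hidle, step, if_neg (by simp), run_replicate_false, step]
  split_ifs with h <;> simp at h ⊢ <;> omega

theorem run_flatMap_block_eq_none_iff {m : ℕ} (hm : k ≤ m) (ℓ : List ℕ) (i : Fin (k + 2)) :
    run k (ℓ.flatMap (block m)) (some i) = none ↔ k ∈ ℓ := by
  induction ℓ with
  | nil => simp [run]
  | cons p ℓ ih =>
    rw [List.flatMap_cons, run_append, List.mem_cons]
    rcases h : run k (ℓ.flatMap (block m)) (some i) with _ | j
    · simp [run_none, ih.1 h]
    · have hk : k ∉ ℓ := fun hk => by rw [ih.2 hk] at h; cases h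
      rw [run_block_eq_none_iff hm]
      simp [hk, eq_comm]

def actHom (k : ℕ) : FreeSemigroup Bool →ₙ* Function.End (CounterState k) where
  toFun w := run k (w.head :: w.tail)
  map_mul' x y := funext fun q => run_append (x.head :: x.tail) (y.head :: y.tail) q

theorem isAlmostConst_actHom {w : FreeSemigroup Bool} (hw : k ≤ w.tail.length) :
    IsAlmostConst (actHom k w) :=
  isAlmostConst_run (w := w.head :: w.tail) (by simpa using hw)

end CounterState

open CounterState

def testWord (P : ℕ → Bool) (m : ℕ) : FreeSemigroup Bool :=
  ⟨false, List.replicate m false ++ ((List.range (m + 1)).filter P).flatMap (block m)⟩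

theorem actHom_testWord {P : ℕ → Bool} {k m : ℕ} (hm : k ≤ m) (i : Fin (k + 2)) :
    actHom k (testWord P m) (some i) = if P k then none else some (Fin.last (k + 1)) := by
  change run k (List.replicate (m + 1) false ++ _) _ = _
  rw [run_append]
  have hP : k ∈ (List.range (m + 1)).filter P ↔ P k := by simp; omega
  rcases h : run k (((List.range (m + 1)).filter P).flatMap (block m)) (some i) with _ | j
  · rw [run_none, if_pos (hP.1 ((run_flatMap_block_eq_none_iff hm _ i).1 h))]
  · have hPk : ¬ P k := fun hPk => by
      rw [(run_flatMap_block_eq_none_iff hm _ i).2 (hP.2 hPk)] at h; cases h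
    rw [run_replicate_false, if_neg hPk]
    exact congrArg some (Fin.ext (by simp; omega))

def Coord (k : ℕ) : Type := NilTrunc k × Function.End (CounterState k)

instance (k : ℕ) : Semigroup (Coord k) :=
  inferInstanceAs (Semigroup (NilTrunc k × Function.End (CounterState k)))

instance (k : ℕ) : Finite (Coord k) :=
  inferInstanceAs (Finite (NilTrunc k × (CounterState k → CounterState k)))

instance (k : ℕ) : TopologicalSpace (Coord k) := ⊥

instance (k : ℕ) : DiscreteTopology (Coord k) := ⟨rfl⟩

def coordHom (k : ℕ) : FreeSemigroup Bool →ₙ* Coord k :=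
  (NilTrunc.lengthHom Bool k).prod (actHom k)

def lengthOnRange (k : ℕ) : (coordHom k).srange →ₙ* NilTrunc k :=
  (MulHom.fst (NilTrunc k) (Function.End (CounterState k))).comp
    (MulMemClass.subtype (coordHom k).srange)

theorem edgeDetermined_idemFiber (k : ℕ) (e : NilTrunc k) (he : e * e = e) :
    EdgeDetermined (idemFiber (lengthOnRange k) e he) := by
  refine .of_injective_isAlmostConst
    ((MulHom.snd (NilTrunc k) (Function.End (CounterState k))).comp
      ((MulMemClass.subtype (coordHom k).srange).comp
        (MulMemClass.subtype (idemFiber (lengthOnRange k) e he)))) ?_ ?_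
  · intro a b h
    exact Subtype.ext (Subtype.ext (Prod.ext (a.2.trans b.2.symm) h))
  · rintro ⟨⟨_, w, rfl⟩, hw⟩
    refine isAlmostConst_actHom (NilTrunc.lengthHom_eq_zero_iff.1 ?_)
    exact hw.trans (NilTrunc.eq_zero_of_mul_self he)

theorem mem_malcev_of_witness {V W : Set FinSgp} {S : FinSgp} (h : MalcevWitness V W S) :
    S ∈ Malcev V W :=
  Set.mem_sInter.2 fun _ hU => hU.2 S h

theorem srange_coordHom_mem_malcev (k : ℕ) :
    FinSgp.mk (coordHom k).srange ∈ Malcev edgeDetermined NPv :=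
  mem_malcev_of_witness ⟨FinSgp.mk (NilTrunc k), lengthOnRange k, NilTrunc.isNilpotentSgp,
    edgeDetermined_idemFiber k⟩

theorem isProfiniteSgp_topologicalClosure {X : Type} [Semigroup X] [TopologicalSpace X]
    [ContinuousMul X] [CompactSpace X] [T2Space X] [TotallyDisconnectedSpace X]
    (G : Subsemigroup X) : IsProfiniteSgp G.topologicalClosure :=
  ⟨inferInstance, isCompact_iff_compactSpace.1 G.isClosed_topologicalClosure.isCompact,
    inferInstance, inferInstance⟩

theorem topGen_topologicalClosure {X : Type} [Semigroup X] [TopologicalSpace X]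
    [ContinuousMul X]
    {A : Set X} {G : Subsemigroup X} (hA : Subsemigroup.closure A = G) :
    TopGen G.topologicalClosure (Subtype.val ⁻¹' A) := by
  have himg : Subtype.val '' ((Subsemigroup.closure (Subtype.val ⁻¹' A :
      Set G.topologicalClosure)) : Set G.topologicalClosure) = G := by
    have hsub : A ⊆ Set.range (Subtype.val : G.topologicalClosure → X) := fun a ha =>
      ⟨⟨a, G.le_topologicalClosure (hA ▸ Subsemigroup.subset_closure ha)⟩, rfl⟩
    rw [← MulMemClass.coe_subtype, ← Subsemigroup.coe_map, MulHom.map_mclosure,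
      MulMemClass.coe_subtype, Set.image_preimage_eq_of_subset hsub, hA]
  exact Set.eq_univ_of_forall fun x => closure_subtype.2 (himg ▸ x.2)

theorem mem_closure_of_eventually_eq {ι α : Type} {C : ι → Type}
    [∀ i, TopologicalSpace (C i)] [∀ i, DiscreteTopology (C i)] {l : Filter α} [l.NeBot]
    {g : α → ∀ i, C i} {x : ∀ i, C i} {s : Set (∀ i, C i)} (hg : ∀ᶠ a in l, g a ∈ s)
    (hx : ∀ i, ∀ᶠ a in l, g a i = x i) : x ∈ closure s :=
  mem_closure_of_tendsto (tendsto_pi_nhds.2 fun i => by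
    rw [nhds_discrete, Filter.tendsto_pure]
    exact hx i) hg

section ProductOfFinite

variable {ι : Type} {C : ι → Type} [∀ i, Semigroup (C i)] [∀ i, TopologicalSpace (C i)]
  [∀ i, DiscreteTopology (C i)]

theorem isProV_topologicalClosure [∀ i, Finite (C i)] (W : Set FinSgp)
    (G : Subsemigroup (∀ i, C i)) (hG : ∀ i, FinSgp.mk (G.map (Pi.evalMulHom C i)) ∈ W) :
    IsProV W G.topologicalClosure := by
  refine ⟨isProfiniteSgp_topologicalClosure G, fun x y hxy => ?_⟩
  obtain ⟨i, hi⟩ : ∃ i, x.1 i ≠ y.1 i := by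
    contrapose! hxy
    exact Subtype.ext (funext hxy)
  have hmem (z : G.topologicalClosure) : z.1 i ∈ G.map (Pi.evalMulHom C i) :=
    closure_minimal
      (t := (fun f : ∀ i, C i => f i) ⁻¹' (G.map (Pi.evalMulHom C i) : Set (C i)))
      (fun g hg => ⟨g, hg, rfl⟩) ((isClosed_discrete _).preimage (continuous_apply i)) z.2
  let f := ((Pi.evalMulHom C i).comp (MulMemClass.subtype _)).codRestrict _ hmem
  have hf : IsLocallyConstant f := .desc f Subtype.val
    ((IsLocallyConstant.iff_continuous _).2 ((continuous_apply i).comp continuous_subtype_val))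
    Subtype.val_injective
  refine ⟨_, f, hG i, @IsLocallyConstant.continuous _ _ _ (instTopologicalSpaceCarrier _) _ hf,
    ?_, fun h => hi (congrArg Subtype.val h)⟩
  rintro ⟨_, g, hg, rfl⟩
  exact ⟨⟨g, G.le_topologicalClosure hg⟩, rfl⟩

end ProductOfFinite

theorem FreeSemigroup.srange_eq_closure {α M : Type} [Semigroup M]
    (f : FreeSemigroup α →ₙ* M) :
    f.srange = Subsemigroup.closure (Set.range (f ∘ FreeSemigroup.of)) := by
  refine le_antisymm ?_ (Subsemigroup.closure_le.2 (Set.range_comp_subset_range _ _))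
  rintro _ ⟨w, rfl⟩
  induction w using FreeSemigroup.recOnMul with
  | ih1 a => exact Subsemigroup.subset_closure ⟨a, rfl⟩
  | ih2 a w ha hw => exact map_mul f _ w ▸ Subsemigroup.mul_mem _ ha hw

def coordPi : FreeSemigroup Bool →ₙ* ∀ k, Coord k := MulHom.pi coordHom

def wordClosure : Subsemigroup (∀ k, Coord k) := coordPi.srange.topologicalClosure

theorem isProV_wordClosure : IsProV (Malcev edgeDetermined NPv) wordClosure :=
  isProV_topologicalClosure _ _ fun k => by
    rw [MulHom.map_srange]
    exact srange_coordHom_mem_malcev k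

theorem coordHom_testWord_of_le {P : ℕ → Bool} {k m : ℕ} (hm : k ≤ m) :
    coordHom k (testWord P m) = coordHom k (testWord P k) := by
  refine Prod.ext ?_ (funext fun q => ?_)
  · change NilTrunc.lengthHom Bool k _ = NilTrunc.lengthHom Bool k _
    rw [NilTrunc.lengthHom_eq_zero_iff.2, NilTrunc.lengthHom_eq_zero_iff.2] <;> simp [testWord]
    omega
  · rcases q with _ | i
    · exact (run_none _).trans (run_none _).symm
    · exact (actHom_testWord hm i).trans (actHom_testWord le_rfl i).symm

def limitPoint (P : ℕ → Bool) : wordClosure :=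
  ⟨fun k => coordHom k (testWord P k), mem_closure_of_eventually_eq (l := Filter.atTop)
    (g := fun m => coordPi (testWord P m)) (.of_forall fun _ => ⟨_, rfl⟩)
    fun k => Filter.eventually_atTop.2 ⟨k, fun _ hm => coordHom_testWord_of_le hm⟩⟩

theorem limitPoint_injective : Function.Injective limitPoint := by
  intro P Q h
  funext k
  have hk := congrArg (fun x : wordClosure => (x.1 k).2 (some 0)) h
  simp only [limitPoint] at hk
  change actHom k _ _ = actHom k _ _ at hk
  rw [actHom_testWord le_rfl, actHom_testWord le_rfl] at hk
  cases hP : P k <;> cases hQ : Q k <;> simp_all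

theorem not_countable_nat_bool : ¬ Countable (ℕ → Bool) := by
  rw [← Cardinal.mk_le_aleph0_iff, not_le, ← Cardinal.power_def]
  simpa using Cardinal.cantor Cardinal.aleph0

theorem not_isLocCountable_wordClosure : ¬ IsLocCountable wordClosure := by
  intro h
  have hgen : TopGen wordClosure (Subtype.val ⁻¹' Set.range (coordPi ∘ FreeSemigroup.of)) :=
    topGen_topologicalClosure (FreeSemigroup.srange_eq_closure coordPi).symm
  have hcount :=
    h _ ((Set.finite_range (coordPi ∘ FreeSemigroup.of)).preimage Subtype.val_injective.injOn)
  rw [TopGen] at hgen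
  rw [hgen, Set.countable_univ_iff] at hcount
  exact not_countable_nat_bool limitPoint_injective.countable

/-- There is a locally finite pseudovariety `V` such that `V ⓜ N` is
not locally countable. -/
theorem exists_locallyFinite_malcev_N_not_locallyCountable :
    ∃ V : Set FinSgp, IsPseudovariety V ∧ PVLocallyFinite V ∧
      ¬ PVLocallyCountable (Malcev V NPv) :=
  ⟨edgeDetermined, isPseudovariety_edgeDetermined, locallyFinite_edgeDetermined,
    fun h => not_isLocCountable_wordClosure (h _ isProV_wordClosure)⟩
end

section
/- Let A be a finite alphabet and let η be an injective monoid endomorphism of the free monoid A* such that the image of η (viewed as a language over A) is star-free. If L ⊆ A* is a star-free language, then the language η(L) = {η(w) : w ∈ L} is star-free. -/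
/-- The star-free languages over the alphabet `A`: the smallest class of languages
containing `∅`, `{ε}` and the singletons `{a}` for letters `a`, and closed under finite
union, concatenation, and complement. -/
inductive StarFree {A : Type} : Set (List A) → Prop
  | empty : StarFree (∅ : Set (List A))
  | eps : StarFree {([] : List A)}
  | single (a : A) : StarFree {[a]}
  | union {L M : Set (List A)} : StarFree L → StarFree M → StarFree (L ∪ M)
  | concat {L M : Set (List A)} : StarFree L → StarFree M →
      StarFree (Set.image2 (· ++ ·) L M)
  | compl {L : Set (List A)} : StarFree L → StarFree Lᶜ

/-- Every singleton language is star-free. -/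
lemma StarFree.singleton_word {A : Type} (w : List A) : StarFree ({w} : Set (List A)) := by
  induction w with
  | nil => exact StarFree.eps
  | cons a t ih =>
    have h := StarFree.concat (StarFree.single a) ih
    simpa [Set.image2_singleton] using h

/-- Intersections of star-free languages are star-free. -/
lemma StarFree.inter {A : Type} {L M : Set (List A)} (hL : StarFree L) (hM : StarFree M) :
    StarFree (L ∩ M) := by
  have h := StarFree.compl (StarFree.union (StarFree.compl hL) (StarFree.compl hM))
  simpa [Set.compl_union] using h

/-- If `η` is an injective endomorphism of the free monoid `A*` whose
image is star-free, then the image under `η` of any star-free language is star-free. -/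
theorem starFree_image_of_injective_endomorphism
    (A : Type) [Fintype A] (η : List A → List A)
    (hmul : ∀ u v : List A, η (u ++ v) = η u ++ η v)
    (hone : η [] = [])
    (hinj : Function.Injective η)
    (himg : StarFree (Set.range η))
    (L : Set (List A)) (hL : StarFree L) :
    StarFree (η '' L) := by
  induction hL with
  | empty => simpa using StarFree.empty
  | eps => simpa [hone] using StarFree.singleton_word ([] : List A)
  | single a => simpa using StarFree.singleton_word (η [a])
  | union h1 h2 ih1 ih2 => simpa [Set.image_union] using StarFree.union ih1 ih2
  | @concat L M h1 h2 ih1 ih2 =>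
    have : η '' Set.image2 (· ++ ·) L M = Set.image2 (· ++ ·) (η '' L) (η '' M) := by
      rw [Set.image_image2]
      simp only [hmul]
      rw [Set.image2_image_left, Set.image2_image_right]
    rw [this]
    exact StarFree.concat ih1 ih2
  | @compl L h ih =>
    have : η '' Lᶜ = Set.range η ∩ (η '' L)ᶜ := by
      ext z
      constructor
      · rintro ⟨x, hx, rfl⟩
        refine ⟨⟨x, rfl⟩, ?_⟩
        rintro ⟨y, hy, hyx⟩
        exact hx (hinj hyx ▸ hy)
      · rintro ⟨⟨x, rfl⟩, hz⟩
        exact ⟨x, fun hx => hz ⟨x, hx, rfl⟩, rfl⟩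
    rw [this]
    exact StarFree.inter himg (StarFree.compl ih)
end
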